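/- arXiv:2603.21005 — 12 statements merged into one kernel-verified Lean document; each statement's English description precedes it below -/
import Mathlib

section
/- Let G be a finite abelian group of order M', and let Ĝ denote the group of characters χ : G → ℂ^×. For every integer n ≥ 1 and all elements c₁, c₂ ∈ G, one has ∑_{d ∣ n} ∑_{χ ∈ Ĝ} (μ(d)/M') · (∑_{b ∈ G, b^d = c₁} χ(b)⁻¹) · χ(c₂)^{n/d} = 1 if n = 1 and c₁ = c₂, and = 0 otherwise. (Equivalently: the matrices Z̃(n) with (a, χ)-entry (μ(n)/M') ∑_{b^n = a} χ(b)⁻¹ are the Möbius inverses of the matrices Z(n) with (χ, a)-entry χ(a)^n, in the sense that ∑_{d ∣ n} Z̃(d) Z(n/d) equals the identity for n = 1 and the zero matrix for n ≥ 2.) -/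
lemma sum_moebius_divisors (n : ℕ) :
    ∑ d ∈ n.divisors, ((ArithmeticFunction.moebius d : ℤ)) =
      if n = 1 then 1 else 0 := by
  calc ∑ d ∈ n.divisors, ((ArithmeticFunction.moebius d : ℤ))
      = (ArithmeticFunction.moebius * ArithmeticFunction.zeta : ArithmeticFunction ℤ) n :=
        ArithmeticFunction.coe_mul_zeta_apply.symm
    _ = (1 : ArithmeticFunction ℤ) n := by rw [ArithmeticFunction.moebius_mul_coe_zeta]
    _ = if n = 1 then 1 else 0 := ArithmeticFunction.one_apply


/-- The finitely many characters of a finite abelian group form a `Fintype`. -/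
noncomputable instance charFintype (G : Type*) [CommGroup G] [Finite G] :
    Fintype (G →* ℂˣ) := by
  have : NeZero (Monoid.exponent G) :=
    ⟨(Monoid.ExponentExists.exponent_pos (Monoid.ExponentExists.of_finite)).ne'⟩
  have h := CommGroup.monoidHom_mulEquiv_of_hasEnoughRootsOfUnity G ℂ
  exact @Fintype.ofFinite _ (Finite.of_equiv G h.some.symm.toEquiv)

section aux
variable (G : Type*) [CommGroup G] [Fintype G]

instance : NeZero (Monoid.exponent G) :=
  ⟨(Monoid.ExponentExists.exponent_pos (Monoid.ExponentExists.of_finite)).ne'⟩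

lemma card_char : Fintype.card (G →* ℂˣ) = Fintype.card G :=
  Fintype.card_congr (CommGroup.monoidHom_mulEquiv_of_hasEnoughRootsOfUnity G ℂ).some.toEquiv

lemma sum_char_eq (a : G) [DecidableEq G] :
    ∑ χ : G →* ℂˣ, (χ a : ℂ) = if a = 1 then (Fintype.card G : ℂ) else 0 := by
  split_ifs with ha
  · simp [ha, card_char]
  · obtain ⟨χ₀, hχ₀⟩ := CommGroup.exists_apply_ne_one_of_hasEnoughRootsOfUnity G ℂ ha
    have hχ₀' : (χ₀ a : ℂ) ≠ 1 := fun h => hχ₀ (Units.ext h)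
    refine eq_zero_of_mul_eq_self_left hχ₀' ?_
    rw [Finset.mul_sum]
    refine Fintype.sum_bijective _ (Group.mulLeft_bijective χ₀) _ _ fun χ ↦ ?_
    simp
end aux


/-- Matrix Möbius inversion: the matrices `Z̃(n)` with `(a, χ)`-entry
`(μ(n)/M') ∑_{b^n = a} χ(b)⁻¹` are the Möbius inverses of the matrices `Z(n)` with
`(χ, a)`-entry `χ(a)^n`: for all `n ≥ 1` and `c₁ c₂ ∈ G`,
`∑_{d ∣ n} ∑_χ (μ(d)/M') (∑_{b^d = c₁} χ(b)⁻¹) χ(c₂)^{n/d}` equals `1` if `n = 1 ∧ c₁ = c₂`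
and `0` otherwise. -/
theorem matrix_moebius_inversion (G : Type*) [CommGroup G] [Fintype G] [DecidableEq G]
    (M' : ℕ) (hM' : Fintype.card G = M') (n : ℕ) (hn : 1 ≤ n) (c₁ c₂ : G) :
    ∑ d ∈ n.divisors, ∑ χ : G →* ℂˣ,
      ((ArithmeticFunction.moebius d : ℂ) / (M' : ℂ)) *
        (∑ b ∈ Finset.univ.filter (fun b => b ^ d = c₁), ((χ b : ℂ))⁻¹) *
        ((χ c₂ : ℂ)) ^ (n / d)
      = if n = 1 ∧ c₁ = c₂ then 1 else 0 := by
  subst hM'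
  have hM0 : (Fintype.card G : ℂ) ≠ 0 := by
    exact_mod_cast (Fintype.card_pos).ne'
  have key : ∀ d ∈ n.divisors,
      (∑ χ : G →* ℂˣ,
        ((ArithmeticFunction.moebius d : ℂ) / (Fintype.card G : ℂ)) *
          (∑ b ∈ Finset.univ.filter (fun b => b ^ d = c₁), ((χ b : ℂ))⁻¹) *
          ((χ c₂ : ℂ)) ^ (n / d))
        = if c₂ ^ n = c₁ then (ArithmeticFunction.moebius d : ℂ) else 0 := by
    intro d hd
    obtain ⟨hdvd, hn0⟩ := Nat.mem_divisors.mp hd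
    have swap : ∑ χ : G →* ℂˣ,
        ((ArithmeticFunction.moebius d : ℂ) / (Fintype.card G : ℂ)) *
          (∑ b ∈ Finset.univ.filter (fun b => b ^ d = c₁), ((χ b : ℂ))⁻¹) *
          ((χ c₂ : ℂ)) ^ (n / d)
        = ((ArithmeticFunction.moebius d : ℂ) / (Fintype.card G : ℂ)) *
          ∑ b ∈ Finset.univ.filter (fun b => b ^ d = c₁),
            ∑ χ : G →* ℂˣ, (χ (b⁻¹ * c₂ ^ (n / d)) : ℂ) := by
      calc ∑ χ : G →* ℂˣ,
          ((ArithmeticFunction.moebius d : ℂ) / (Fintype.card G : ℂ)) *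
            (∑ b ∈ Finset.univ.filter (fun b => b ^ d = c₁), ((χ b : ℂ))⁻¹) *
            ((χ c₂ : ℂ)) ^ (n / d)
          = ∑ χ : G →* ℂˣ, ∑ b ∈ Finset.univ.filter (fun b => b ^ d = c₁),
              ((ArithmeticFunction.moebius d : ℂ) / (Fintype.card G : ℂ)) *
                (χ (b⁻¹ * c₂ ^ (n / d)) : ℂ) := by
            refine Finset.sum_congr rfl fun χ _ => ?_
            rw [Finset.mul_sum, Finset.sum_mul]
            refine Finset.sum_congr rfl fun b _ => ?_
            have : (χ (b⁻¹ * c₂ ^ (n / d)) : ℂ) = ((χ b : ℂ))⁻¹ * ((χ c₂ : ℂ)) ^ (n / d) := by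
              push_cast [map_mul, map_inv, map_pow]
              ring
            rw [this]; ring
        _ = ∑ b ∈ Finset.univ.filter (fun b => b ^ d = c₁), ∑ χ : G →* ℂˣ,
              ((ArithmeticFunction.moebius d : ℂ) / (Fintype.card G : ℂ)) *
                (χ (b⁻¹ * c₂ ^ (n / d)) : ℂ) := Finset.sum_comm
        _ = _ := by
            rw [Finset.mul_sum]
            exact Finset.sum_congr rfl fun b _ => (Finset.mul_sum _ _ _).symm
    rw [swap]
    have inner : ∑ b ∈ Finset.univ.filter (fun b => b ^ d = c₁),
        ∑ χ : G →* ℂˣ, (χ (b⁻¹ * c₂ ^ (n / d)) : ℂ)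
        = if c₂ ^ n = c₁ then (Fintype.card G : ℂ) else 0 := by
      have : ∀ b : G, (∑ χ : G →* ℂˣ, (χ (b⁻¹ * c₂ ^ (n / d)) : ℂ))
          = if b = c₂ ^ (n / d) then (Fintype.card G : ℂ) else 0 := by
        intro b
        rw [sum_char_eq]
        congr 1
        simp [inv_mul_eq_one, eq_comm]
      rw [Finset.sum_congr rfl fun b _ => this b, Finset.sum_ite_eq' _ (c₂ ^ (n / d))]
      have hmem : (c₂ ^ (n / d)) ∈ Finset.univ.filter (fun b => b ^ d = c₁)
          ↔ c₂ ^ n = c₁ := by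
        simp [← pow_mul, Nat.div_mul_cancel hdvd]
      split_ifs with h1 h2 h2 <;> first | rfl | exact absurd (hmem.mp h1) h2 |
        exact absurd (hmem.mpr h2) h1
    rw [inner]
    split_ifs <;> field_simp <;> simp
  rw [Finset.sum_congr rfl key]
  rcases eq_or_ne (c₂ ^ n) c₁ with h | h
  · simp only [h, if_pos]
    have := sum_moebius_divisors n
    have hc : ∑ d ∈ n.divisors, (ArithmeticFunction.moebius d : ℂ)
        = if n = 1 then 1 else 0 := by
      calc ∑ d ∈ n.divisors, ((ArithmeticFunction.moebius d : ℤ) : ℂ)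
          = ((∑ d ∈ n.divisors, (ArithmeticFunction.moebius d : ℤ) : ℤ) : ℂ) := by push_cast; rfl
        _ = _ := by rw [this]; split_ifs <;> simp
    rw [hc]
    rcases eq_or_ne n 1 with hn1 | hn1
    · subst hn1
      have : c₁ = c₂ := by rw [← h, pow_one]
      simp [this]
    · have : ¬ (n = 1 ∧ c₁ = c₂) := fun ⟨h1, _⟩ => hn1 h1
      simp [hn1, this]
  · simp only [h, if_neg, Finset.sum_const_zero]
    have : ¬ (n = 1 ∧ c₁ = c₂) := by
      rintro ⟨h1, h2⟩
      exact h (by rw [h1, pow_one, h2])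
    simp [this]
end

section
/- Let G be a finite cyclic group of order M', let n ≥ 1 be an integer, let g = gcd(n, M'), and let h be a positive integer with (n/g)·h ≡ 1 (mod M'). Fix a ∈ G and a character χ : G → ℂ^×. If a = a₀^g for some a₀ ∈ G and χ = ψ^g for some character ψ of G, then ∑_{b ∈ G, b^n = a} χ(b)⁻¹ = g · χ(a₀)^{−h}, and this value does not depend on the choice of the g-th root a₀ of a. If a is not a g-th power in G, or χ is not a g-th power in the character group of G, then ∑_{b ∈ G, b^n = a} χ(b)⁻¹ = 0. -/
open Finset Subgroup

/-- Auxiliary: if a character of a finite cyclic group is trivial on the `g`-torsion,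
then it is a `g`-th power in the character group. -/
lemma aux_char_pow (G : Type*) [CommGroup G] [IsCyclic G] [Fintype G]
    (g : ℕ) (hg0 : 0 < g) (hgM : g ∣ Fintype.card G) (χ : G →* ℂˣ)
    (hχ : ∀ c : G, c ^ g = 1 → χ c = 1) : ∃ ψ : G →* ℂˣ, ψ ^ g = χ := by
  obtain ⟨γ, hγ⟩ := IsCyclic.exists_generator (α := G)
  have hord : orderOf γ = Fintype.card G := by
    rw [orderOf_eq_card_of_forall_mem_zpowers hγ, Nat.card_eq_fintype_card]
  obtain ⟨z, hz⟩ := IsAlgClosed.exists_pow_nat_eq ((χ γ : ℂ)) hg0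
  have hz0 : z ≠ 0 := by
    intro h0
    apply (χ γ).ne_zero
    rw [← hz, h0, zero_pow hg0.ne']
  have hξg : (Units.mk0 z hz0) ^ g = χ γ := by
    ext
    push_cast
    exact hz
  have hcard : (Units.mk0 z hz0) ^ Fintype.card G = 1 := by
    obtain ⟨m, hm⟩ := hgM
    have h1 : χ (γ ^ m) = 1 := by
      apply hχ
      rw [← pow_mul, mul_comm, ← hm, ← hord, pow_orderOf_eq_one]
    rw [hm, pow_mul, hξg, ← map_pow, h1]
  have hdvd : orderOf (Units.mk0 z hz0) ∣ orderOf γ := by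
    rw [hord]
    exact orderOf_dvd_of_pow_eq_one hcard
  refine ⟨monoidHomOfForallMemZpowers hγ hdvd, ?_⟩
  rw [MonoidHom.eq_iff_eq_on_generator hγ]
  have h2 : (monoidHomOfForallMemZpowers hγ hdvd) γ = Units.mk0 z hz0 :=
    monoidHomOfForallMemZpowers_apply_gen hγ hdvd
  rw [MonoidHom.pow_apply, h2, hξg]

/-- Let `G` be a finite cyclic group of order `M'`, `n ≥ 1`, `g = gcd(n, M')`, and `h > 0`
with `(n/g)·h ≡ 1 (mod M')`. If `a = a₀^g` and `χ = ψ^g`, then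
`∑_{b^n = a} χ(b)⁻¹ = g·χ(a₀)^{−h}` (independently of the choice of the `g`-th root `a₀`);
if `a` is not a `g`-th power or `χ` is not a `g`-th power, the sum vanishes. -/
theorem char_sum_general_case (G : Type*) [CommGroup G] [IsCyclic G] [Fintype G]
    [DecidableEq G] (M' : ℕ) (hM' : Fintype.card G = M') (n : ℕ) (hn : 1 ≤ n)
    (g : ℕ) (hg : g = Nat.gcd n M') (h : ℕ) (hh : 0 < h) (hinv : (n / g) * h ≡ 1 [MOD M'])
    (a : G) (χ : G →* ℂˣ) :
    (∀ a₀ : G, a₀ ^ g = a → ∀ ψ : G →* ℂˣ, ψ ^ g = χ →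
      (∑ b ∈ Finset.univ.filter (fun b => b ^ n = a), ((χ b : ℂ))⁻¹)
        = (g : ℂ) * (((χ a₀ : ℂ)) ^ h)⁻¹) ∧
    (((¬ ∃ a₀ : G, a₀ ^ g = a) ∨ (¬ ∃ ψ : G →* ℂˣ, ψ ^ g = χ)) →
      (∑ b ∈ Finset.univ.filter (fun b => b ^ n = a), ((χ b : ℂ))⁻¹) = 0) := by
  have hM0 : 0 < M' := hM' ▸ Fintype.card_pos
  have hgn : g ∣ n := hg ▸ Nat.gcd_dvd_left n M'
  have hgM : g ∣ M' := hg ▸ Nat.gcd_dvd_right n M'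
  have hg0 : 0 < g := by
    rw [hg]
    exact Nat.gcd_pos_of_pos_left M' hn
  -- helper : x^M' = 1 → x^((n/g)*h) = x, in any group
  have keyG : ∀ x : G, x ^ (n / g * h) = x := by
    intro x
    have hx : x ^ M' = 1 := by rw [← hM']; exact pow_card_eq_one
    have hdvd : orderOf x ∣ M' := orderOf_dvd_of_pow_eq_one hx
    conv_rhs => rw [← pow_one x]
    rw [pow_eq_pow_iff_modEq]
    exact Nat.ModEq.of_dvd hdvd hinv
  have keyC : ∀ x : ℂˣ, x ^ M' = 1 → x ^ (n / g * h) = x := by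
    intro x hx
    have hdvd : orderOf x ∣ M' := orderOf_dvd_of_pow_eq_one hx
    conv_rhs => rw [← pow_one x]
    rw [pow_eq_pow_iff_modEq]
    exact Nat.ModEq.of_dvd hdvd hinv
  have hGM : ∀ x : G, x ^ M' = 1 := fun x => by rw [← hM']; exact pow_card_eq_one
  have hgng : g * (n / g) = n := Nat.mul_div_cancel' hgn
  have hngg : n / g * g = n := Nat.div_mul_cancel hgn
  constructor
  · -- main case
    intro a₀ ha₀ ψ hψ
    -- each term is constant
    have hconst : ∀ b : G, b ^ n = a → (χ b : ℂ)⁻¹ = ((χ a₀ : ℂ) ^ h)⁻¹ := by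
      intro b hb
      have h2 : (χ b) ^ M' = 1 := by rw [← map_pow, hGM, map_one]
      have h1 : χ b = (χ a₀) ^ h := by
        calc χ b = (χ b) ^ (n / g * h) := (keyC (χ b) h2).symm
        _ = ((ψ b) ^ g) ^ (n / g * h) := by rw [← hψ, MonoidHom.pow_apply]
        _ = (ψ b) ^ (g * (n / g) * h) := by rw [← pow_mul, mul_assoc]
        _ = ψ (b ^ n) ^ h := by rw [hgng, pow_mul, map_pow]
        _ = ψ (a₀ ^ g) ^ h := by rw [hb, ha₀]
        _ = (χ a₀) ^ h := by rw [map_pow, ← hψ, MonoidHom.pow_apply]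
      rw [h1]
      push_cast
      ring
    -- the fiber has g elements
    have hb₀ : (a₀ ^ h) ^ n = a := by
      rw [← pow_mul, mul_comm h n, ← hgng, mul_assoc, pow_mul, ha₀]
      exact keyG a
    have hcard : (Finset.univ.filter (fun b : G => b ^ n = a)).card = g := by
      have hbij : (Finset.univ.filter (fun b : G => b ^ n = a)).card
          = (Finset.univ.filter (fun x : G => x ^ n = 1)).card := by
        apply Finset.card_bij' (fun b _ => b * (a₀ ^ h)⁻¹) (fun x _ => x * a₀ ^ h)
        · intro b hb
          simp only [Finset.mem_filter, Finset.mem_univ, true_and] at hb ⊢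
          rw [mul_pow, hb, inv_pow, hb₀, mul_inv_cancel]
        · intro x hx
          simp only [Finset.mem_filter, Finset.mem_univ, true_and] at hx ⊢
          rw [mul_pow, hx, hb₀, one_mul]
        · intro b _; group
        · intro x _; group
      rw [hbij]
      have hfe : (Finset.univ.filter (fun x : G => x ^ n = 1))
          = (Finset.univ.filter (fun x : G => x ^ g = 1)) := by
        ext x
        simp only [Finset.mem_filter, Finset.mem_univ, true_and,
          ← orderOf_dvd_iff_pow_eq_one]
        have hxM : orderOf x ∣ M' := orderOf_dvd_of_pow_eq_one (hGM x)
        constructor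
        · intro hd; rw [hg]; exact Nat.dvd_gcd hd hxM
        · intro hd; exact hd.trans hgn
      rw [hfe]
      -- card of g-torsion is g
      refine le_antisymm ?_ ?_
      · exact IsCyclic.card_pow_eq_one_le hg0
      · obtain ⟨γ, hγ⟩ := IsCyclic.exists_generator (α := G)
        have hord : orderOf γ = M' := by
          rw [orderOf_eq_card_of_forall_mem_zpowers hγ, Nat.card_eq_fintype_card, hM']
        set c := γ ^ (M' / g) with hc
        have hcord : orderOf c = g := by
          rw [hc, orderOf_pow, hord, Nat.gcd_eq_right (Nat.div_dvd_of_dvd hgM),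
            Nat.div_div_self hgM hM0.ne']
        apply Finset.le_card_of_inj_on_range (c ^ ·)
        · intro i _
          simp only [Finset.mem_filter, Finset.mem_univ, true_and]
          rw [← pow_mul, mul_comm, pow_mul, ← hcord, pow_orderOf_eq_one, one_pow]
        · intro i hi j hj hij
          exact pow_injOn_Iio_orderOf (by rwa [hcord]) (by rwa [hcord]) hij
    calc (∑ b ∈ Finset.univ.filter (fun b => b ^ n = a), ((χ b : ℂ))⁻¹)
        = ∑ b ∈ Finset.univ.filter (fun b => b ^ n = a), ((χ a₀ : ℂ) ^ h)⁻¹ := by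
          apply Finset.sum_congr rfl
          intro b hb
          simp only [Finset.mem_filter, Finset.mem_univ, true_and] at hb
          exact hconst b hb
      _ = (g : ℂ) * ((χ a₀ : ℂ) ^ h)⁻¹ := by
          rw [Finset.sum_const, hcard, nsmul_eq_mul]
  · -- vanishing cases
    rintro (hna | hnψ)
    · -- not a g-th power: fiber is empty
      have hemp : Finset.univ.filter (fun b : G => b ^ n = a) = ∅ := by
        apply Finset.filter_eq_empty_iff.mpr
        intro b _ hb
        exact hna ⟨b ^ (n / g), by rw [← pow_mul, hngg, hb]⟩
      rw [hemp, Finset.sum_empty]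
    · -- χ not a g-th power: find c with c^g = 1, χ c ≠ 1
      have hgM' : g ∣ Fintype.card G := hM' ▸ hgM
      obtain ⟨c, hcg, hcχ⟩ : ∃ c : G, c ^ g = 1 ∧ χ c ≠ 1 := by
        by_contra hcon
        push_neg at hcon
        exact hnψ (aux_char_pow G g hg0 hgM' χ hcon)
      have hcn : c ^ n = 1 := by
        rw [← hgng, pow_mul, hcg, one_pow]
      set S := Finset.univ.filter (fun b : G => b ^ n = a) with hS
      have hc0 : (χ c : ℂ) ≠ 0 := Units.ne_zero _
      have hsum : (∑ b ∈ S, ((χ b : ℂ))⁻¹) = (χ c : ℂ)⁻¹ * ∑ b ∈ S, ((χ b : ℂ))⁻¹ := by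
        rw [Finset.mul_sum]
        apply Finset.sum_bij' (fun b _ => c⁻¹ * b) (fun b _ => c * b)
        · intro b hb
          simp only [hS, Finset.mem_filter, Finset.mem_univ, true_and] at hb ⊢
          rw [mul_pow, hb, inv_pow, hcn, inv_one, one_mul]
        · intro b hb
          simp only [hS, Finset.mem_filter, Finset.mem_univ, true_and] at hb ⊢
          rw [mul_pow, hb, hcn, one_mul]
        · intro b _; group
        · intro b _; group
        · intro b _
          have h3 : χ (c⁻¹ * b) = (χ c)⁻¹ * χ b := by rw [map_mul, map_inv]
          rw [h3]
          push_cast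
          rw [mul_inv, inv_inv, ← mul_assoc, inv_mul_cancel₀ hc0, one_mul]
      have h0 : (1 - (χ c : ℂ)⁻¹) * (∑ b ∈ S, ((χ b : ℂ))⁻¹) = 0 := by
        rw [sub_mul, one_mul]
        exact sub_eq_zero.mpr hsum
      have hne : (χ c : ℂ)⁻¹ ≠ 1 := by
        intro h1
        apply hcχ
        ext
        push_cast
        rw [← inv_inv ((χ c : ℂ)), h1, inv_one]
      rcases mul_eq_zero.mp h0 with h1 | h1
      · exact absurd (sub_eq_zero.mp h1).symm hne
      · exact h1
end

section
/- Let F be a finite field, let α, β, γ, δ ∈ F with αδ − βγ ≠ 0, let m ∈ F[T] be a monic polynomial of degree M ≥ 1, and suppose (m|_M B)(T) = λ·m(T) for some nonzero λ ∈ F, where B = (α, β; γ, δ). Let N ≥ 2 and let c ∈ F[T] be coprime to m with deg c ≤ N. Then the map f ↦ f|_N B is a bijection from the set of irreducible polynomials f ∈ F[T] (not necessarily monic) of degree N with m dividing f − c onto the set of irreducible polynomials f ∈ F[T] (not necessarily monic) of degree N with m dividing f − (c|_N B). In particular these two sets have the same cardinality. -/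
open Polynomial

/-- The weight-`n` action of the matrix `B = (α, β; γ, δ)` on a polynomial:
`(f|_n B)(T) = ∑_{i=0}^{n} a_i (αT + β)^i (γT + δ)^{n−i}` where `f = ∑ a_i T^i`. -/
noncomputable def slash {F : Type*} [Field F] (α β γ δ : F) (n : ℕ) (f : Polynomial F) :
    Polynomial F :=
  ∑ i ∈ Finset.range (n + 1),
    C (f.coeff i) * (C α * X + C β) ^ i * (C γ * X + C δ) ^ (n - i)

namespace SlashAux

variable {F : Type*} [Field F] (α β γ δ : F)

lemma slash_zero (n : ℕ) : slash α β γ δ n (0 : Polynomial F) = 0 := by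
  simp [slash]

lemma slash_sub (n : ℕ) (f g : Polynomial F) :
    slash α β γ δ n (f - g) = slash α β γ δ n f - slash α β γ δ n g := by
  simp only [slash, coeff_sub, C_sub, sub_mul, Finset.sum_sub_distrib]

lemma slash_C_mul (n : ℕ) (a : F) (f : Polynomial F) :
    slash α β γ δ n (C a * f) = C a * slash α β γ δ n f := by
  simp only [slash, coeff_C_mul, C_mul, Finset.mul_sum, mul_assoc]

lemma natDegree_slash_le (n : ℕ) (f : Polynomial F) : (slash α β γ δ n f).natDegree ≤ n := by
  apply natDegree_sum_le_of_forall_le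
  intro i hi
  simp only [Finset.mem_range, Nat.lt_succ_iff] at hi
  calc (C (f.coeff i) * (C α * X + C β) ^ i * (C γ * X + C δ) ^ (n - i)).natDegree
      ≤ (C (f.coeff i) * (C α * X + C β) ^ i).natDegree + ((C γ * X + C δ) ^ (n - i)).natDegree :=
        natDegree_mul_le
    _ ≤ ((C (f.coeff i)).natDegree + ((C α * X + C β) ^ i).natDegree) + (n-i) * (C γ * X + C δ).natDegree := by
        gcongr
        · exact natDegree_mul_le
        · exact natDegree_pow_le
    _ ≤ (0 + i * 1) + (n - i) * 1 := by
        gcongr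
        · exact (natDegree_C _).le
        · exact natDegree_pow_le.trans (by gcongr; exact natDegree_linear_le)
        · exact natDegree_linear_le
    _ ≤ n := by omega

/-- Key evaluation formula in a field extension. -/
lemma aeval_slash {K : Type*} [Field K] [Algebra F K] (n : ℕ) (f : Polynomial F)
    (hf : f.natDegree ≤ n) (x : K) (hd : aeval x (C γ * X + C δ) ≠ 0) :
    aeval x (slash α β γ δ n f) =
      (aeval x (C γ * X + C δ)) ^ n *
        aeval ((aeval x (C α * X + C β)) / (aeval x (C γ * X + C δ))) f := by
  set a := aeval x (C α * X + C β) with ha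
  set d := aeval x (C γ * X + C δ) with hdd
  rw [aeval_eq_sum_range' (lt_of_le_of_lt hf (Nat.lt_succ_self n)) (a / d)]
  rw [slash, map_sum, Finset.mul_sum]
  apply Finset.sum_congr rfl
  intro i hi
  simp only [Finset.mem_range, Nat.lt_succ_iff] at hi
  rw [map_mul, map_mul, map_pow, map_pow, aeval_C, ← ha, ← hdd]
  rw [Algebra.smul_def, div_pow]
  have hdn : d ^ n = d ^ i * d ^ (n - i) := by rw [← pow_add]; congr 1; omega
  field_simp [hdn]
  rw [hdn]; ring

lemma linear_ne_zero {u v : F} (h : ¬(u = 0 ∧ v = 0)) : (C u * X + C v : Polynomial F) ≠ 0 := by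
  intro h0
  apply h
  constructor
  · have := congrArg (fun p => Polynomial.coeff p 1) h0
    simpa using this
  · have := congrArg (fun p => Polynomial.coeff p 0) h0
    simpa using this

lemma aeval_ratFuncX (p : Polynomial F) :
    aeval (algebraMap (Polynomial F) (RatFunc F) X) p = algebraMap (Polynomial F) (RatFunc F) p := by
  have := aeval_algHom_apply (IsScalarTower.toAlgHom F (Polynomial F) (RatFunc F)) X p
  simpa using this

lemma slash_mul (hD : (C γ * X + C δ : Polynomial F) ≠ 0) (n1 n2 : ℕ) (f g : Polynomial F)
    (hf : f.natDegree ≤ n1) (hg : g.natDegree ≤ n2) :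
    slash α β γ δ (n1 + n2) (f * g) = slash α β γ δ n1 f * slash α β γ δ n2 g := by
  apply RatFunc.algebraMap_injective F
  set ι := algebraMap (Polynomial F) (RatFunc F) with hι
  set x : RatFunc F := ι X with hx
  have key : ∀ p : Polynomial F, aeval x p = ι p := fun p => aeval_ratFuncX p
  have hd : aeval x (C γ * X + C δ) ≠ 0 := by
    rw [key]
    exact fun h => hD ((map_eq_zero_iff ι (RatFunc.algebraMap_injective F)).mp h)
  rw [map_mul, ← key, ← key, ← key,
    aeval_slash α β γ δ (n1 + n2) (f * g) (natDegree_mul_le.trans (add_le_add hf hg)) x hd,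
    aeval_slash α β γ δ n1 f hf x hd, aeval_slash α β γ δ n2 g hg x hd,
    map_mul, pow_add]
  ring

end SlashAux

namespace SlashAux3
open SlashAux
variable {F : Type*} [Field F] {α β γ δ : F}

lemma slash_slash (hB : α * δ - β * γ ≠ 0) (n : ℕ) (f : Polynomial F)
    (hf : f.natDegree ≤ n) :
    slash δ (-β) (-γ) α n (slash α β γ δ n f) = C ((α * δ - β * γ) ^ n) * f := by
  apply RatFunc.algebraMap_injective F
  set K := RatFunc F with hK
  set ι := algebraMap (Polynomial F) K with hι
  set x : K := ι X with hx
  have key : ∀ p : Polynomial F, aeval x p = ι p := fun p => aeval_ratFuncX p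
  have hinj := RatFunc.algebraMap_injective F
  have hdetK : algebraMap F K (α * δ - β * γ) ≠ 0 := by
    intro h
    exact hB ((map_eq_zero_iff (algebraMap F K) (RingHom.injective _)).mp h)
  have hd'poly : (C (-γ) * X + C α : Polynomial F) ≠ 0 :=
    linear_ne_zero (fun ⟨h3, h4⟩ => hB (by rw [h4, neg_eq_zero.mp h3]; ring))
  have hd' : aeval x (C (-γ) * X + C α) ≠ 0 := by
    rw [key]
    exact fun h => hd'poly ((map_eq_zero_iff ι hinj).mp h)
  set a' : K := aeval x (C δ * X + C (-β)) with ha'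
  set d' : K := aeval x (C (-γ) * X + C α) with hd'def
  set y : K := a' / d' with hy
  have hg : (slash α β γ δ n f).natDegree ≤ n := natDegree_slash_le α β γ δ n f
  rw [← key, aeval_slash δ (-β) (-γ) α n _ hg x hd', ← ha', ← hd'def, ← hy]
  have hcomb1 : algebraMap F K γ * a' + algebraMap F K δ * d' =
      algebraMap F K (α * δ - β * γ) := by
    rw [ha', hd'def]
    simp only [map_add, map_mul, aeval_C, aeval_X, map_sub, map_neg]
    ring
  have hcomb2 : algebraMap F K α * a' + algebraMap F K β * d' =
      algebraMap F K (α * δ - β * γ) * x := by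
    rw [ha', hd'def]
    simp only [map_add, map_mul, aeval_C, aeval_X, map_sub, map_neg]
    ring
  have hyD : aeval y (C γ * X + C δ) = algebraMap F K (α * δ - β * γ) / d' := by
    simp only [map_add, map_mul, aeval_C, aeval_X, hy]
    rw [← hcomb1]
    rw [add_div, mul_div_assoc, mul_div_cancel_right₀ _ hd']
  have hyDne : aeval y (C γ * X + C δ) ≠ 0 := by
    rw [hyD]
    exact div_ne_zero hdetK hd'
  have hyA : aeval y (C α * X + C β) = algebraMap F K (α * δ - β * γ) * x / d' := by
    simp only [map_add, map_mul, aeval_C, aeval_X, hy]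
    rw [← hcomb2]
    rw [add_div, mul_div_assoc, mul_div_cancel_right₀ _ hd']
  rw [aeval_slash α β γ δ n f hf y hyDne, hyA, hyD]
  have hdetK' : (algebraMap F K) α * (algebraMap F K) δ -
      (algebraMap F K) β * (algebraMap F K) γ ≠ 0 := by
    rw [← map_mul, ← map_mul, ← map_sub]; exact hdetK
  have hratio : algebraMap F K (α * δ - β * γ) * x / d' /
      (algebraMap F K (α * δ - β * γ) / d') = x := by
    rw [div_div_div_cancel_right₀ hd', mul_div_cancel_left₀ _ hdetK]
  have hCe : ∀ e : F, ι (C e) = algebraMap F K e := fun e => by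
    rw [hι, ← Polynomial.algebraMap_eq, ← IsScalarTower.algebraMap_apply]
  rw [hratio, key f, map_mul, hCe, map_pow, div_pow]
  rw [← mul_assoc, mul_div_cancel₀ _ (pow_ne_zero n hd')]

lemma no_root {f : Polynomial F} (hirr : Irreducible f) (hdeg : 2 ≤ f.natDegree) (x : F) :
    f.eval x ≠ 0 := by
  intro h
  obtain ⟨g, hg⟩ := dvd_iff_isRoot.mpr h
  rcases hirr.isUnit_or_isUnit hg with hu | hu
  · exact Polynomial.not_isUnit_X_sub_C x hu
  · have hg0 : g ≠ 0 := fun h0 => hirr.ne_zero (by simp [hg, h0])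
    have : f.natDegree = 1 := by
      rw [hg, natDegree_mul (X_sub_C_ne_zero x) hg0, natDegree_X_sub_C,
        natDegree_eq_zero_of_isUnit hu]
    omega

lemma coeff_slash_top (n : ℕ) (f : Polynomial F) :
    (slash α β γ δ n f).coeff n =
      ∑ i ∈ Finset.range (n + 1), f.coeff i * α ^ i * γ ^ (n - i) := by
  rw [slash, finset_sum_coeff]
  apply Finset.sum_congr rfl
  intro i hi
  simp only [Finset.mem_range, Nat.lt_succ_iff] at hi
  have h1 : (C (f.coeff i) * (C α * X + C β) ^ i).natDegree ≤ i := by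
    refine natDegree_mul_le.trans ?_
    simp only [natDegree_C, zero_add]
    exact natDegree_pow_le.trans (by
      calc i * (C α * X + C β).natDegree ≤ i * 1 := by gcongr; exact natDegree_linear_le
        _ = i := mul_one i)
  have h2 : ((C γ * X + C δ) ^ (n - i)).natDegree ≤ n - i :=
    natDegree_pow_le.trans (by
      calc (n-i) * (C γ * X + C δ).natDegree ≤ (n-i) * 1 := by gcongr; exact natDegree_linear_le
        _ = n - i := mul_one _)
  set k := n - i with hk
  have hn : n = i + k := by omega
  rw [hn, coeff_mul_add_eq_of_natDegree_le h1 h2, coeff_C_mul]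
  have hA : ((C α * X + C β : Polynomial F) ^ i).coeff i = α ^ i := by
    have := coeff_pow_of_natDegree_le (p := (C α * X + C β : Polynomial F)) (n := 1) (m := i)
      natDegree_linear_le
    simpa using this
  have hD : ((C γ * X + C δ : Polynomial F) ^ k).coeff k = γ ^ k := by
    have := coeff_pow_of_natDegree_le (p := (C γ * X + C δ : Polynomial F)) (n := 1) (m := k)
      natDegree_linear_le
    simpa using this
  rw [hA, hD, mul_assoc]

lemma natDegree_slash_eq (hB : α * δ - β * γ ≠ 0) {f : Polynomial F}
    (hirr : Irreducible f) {n : ℕ} (hdeg : f.natDegree = n) (hn : 2 ≤ n) :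
    (slash α β γ δ n f).natDegree = n := by
  have hne : (slash α β γ δ n f).coeff n ≠ 0 := by
    rw [coeff_slash_top]
    by_cases hγ : γ = 0
    · subst hγ
      have hα : α ≠ 0 := fun h => hB (by rw [h]; ring)
      rw [Finset.sum_eq_single n]
      · simp only [Nat.sub_self, pow_zero, mul_one]
        exact mul_ne_zero (by rw [← hdeg]; exact hirr.ne_zero ∘ leadingCoeff_eq_zero.mp)
          (pow_ne_zero _ hα)
      · intro b hb hbn
        simp only [Finset.mem_range, Nat.lt_succ_iff] at hb
        rw [zero_pow (by omega : n - b ≠ 0), mul_zero]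
      · intro hn'
        exact absurd (Finset.mem_range.mpr (Nat.lt_succ_self n)) hn'
    · have heq : ∑ i ∈ Finset.range (n + 1), f.coeff i * α ^ i * γ ^ (n - i) =
          γ ^ n * f.eval (α / γ) := by
        rw [eval_eq_sum_range' (by omega : f.natDegree < n + 1), Finset.mul_sum]
        apply Finset.sum_congr rfl
        intro i hi
        simp only [Finset.mem_range, Nat.lt_succ_iff] at hi
        have hgn : γ ^ n = γ ^ i * γ ^ (n - i) := by rw [← pow_add]; congr 1; omega
        field_simp [hgn]
        rw [hgn, div_pow]; field_simp
      rw [heq]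
      exact mul_ne_zero (pow_ne_zero _ hγ) (no_root hirr (by omega) _)
  exact le_antisymm (natDegree_slash_le α β γ δ n f) (le_natDegree_of_ne_zero hne)

lemma isUnit_of_natDegree_zero {u : Polynomial F} (hu0 : u ≠ 0) (hu : u.natDegree = 0) :
    IsUnit u := by
  rw [Polynomial.isUnit_iff_degree_eq_zero]
  rw [degree_eq_natDegree hu0, hu]
  rfl

lemma irreducible_slash (hB : α * δ - β * γ ≠ 0) {f : Polynomial F}
    (hirr : Irreducible f) {n : ℕ} (hdeg : f.natDegree = n) (hn : 2 ≤ n) :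
    Irreducible (slash α β γ δ n f) := by
  have hD'ne : (C (-γ) * X + C α : Polynomial F) ≠ 0 :=
    linear_ne_zero (fun ⟨h3, h4⟩ => hB (by rw [h4, neg_eq_zero.mp h3]; ring))
  have hgdeg : (slash α β γ δ n f).natDegree = n := natDegree_slash_eq hB hirr hdeg hn
  have hg0 : slash α β γ δ n f ≠ 0 := fun h => by
    rw [h, natDegree_zero] at hgdeg; omega
  constructor
  · exact fun hu => by
      have := natDegree_eq_zero_of_isUnit hu
      omega
  · intro u v huv
    by_contra hcon
    push_neg at hcon
    obtain ⟨hu, hv⟩ := hcon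
    have hu0 : u ≠ 0 := fun h => hg0 (by rw [huv, h, zero_mul])
    have hv0 : v ≠ 0 := fun h => hg0 (by rw [huv, h, mul_zero])
    have hnuv : u.natDegree + v.natDegree = n := by
      rw [← hgdeg, huv, natDegree_mul hu0 hv0]
    -- apply the adjugate slash
    have hss : slash δ (-β) (-γ) α n (slash α β γ δ n f) = C ((α * δ - β * γ) ^ n) * f :=
      slash_slash hB n f hdeg.le
    have hmul : slash δ (-β) (-γ) α n (u * v) =
        slash δ (-β) (-γ) α u.natDegree u * slash δ (-β) (-γ) α v.natDegree v := by
      rw [← hnuv] at huv hss ⊢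
      exact slash_mul δ (-β) (-γ) α hD'ne u.natDegree v.natDegree u v le_rfl le_rfl
    have hkey : C ((α * δ - β * γ) ^ n) * f =
        slash δ (-β) (-γ) α u.natDegree u * slash δ (-β) (-γ) α v.natDegree v := by
      rw [← hss, huv, hmul]
    have hdetn : (α * δ - β * γ) ^ n ≠ 0 := pow_ne_zero _ hB
    have hCf_irr : Irreducible (C ((α * δ - β * γ) ^ n) * f) := by
      have ha : Associated f (C ((α * δ - β * γ) ^ n) * f) :=
        ⟨(Polynomial.isUnit_C.mpr hdetn.isUnit).unit, mul_comm f _⟩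
      exact ha.irreducible hirr
    have hCf0 : C ((α * δ - β * γ) ^ n) * f ≠ 0 :=
      mul_ne_zero (fun h => hdetn (C_eq_zero.mp h)) hirr.ne_zero
    have hCfdeg : (C ((α * δ - β * γ) ^ n) * f).natDegree = n := by
      rw [natDegree_mul (fun h => hdetn (C_eq_zero.mp h)) hirr.ne_zero, natDegree_C, hdeg,
        zero_add]
    set P := slash δ (-β) (-γ) α u.natDegree u with hP
    set Q := slash δ (-β) (-γ) α v.natDegree v with hQ
    have hP0 : P ≠ 0 := fun h => hCf0 (by rw [hkey, h, zero_mul])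
    have hQ0 : Q ≠ 0 := fun h => hCf0 (by rw [hkey, h, mul_zero])
    have hPle : P.natDegree ≤ u.natDegree := natDegree_slash_le _ _ _ _ _ _
    have hQle : Q.natDegree ≤ v.natDegree := natDegree_slash_le _ _ _ _ _ _
    have hPQ : P.natDegree + Q.natDegree = n := by
      rw [← hCfdeg, hkey, natDegree_mul hP0 hQ0]
    rcases hCf_irr.isUnit_or_isUnit hkey with hPu | hQu
    · have := natDegree_eq_zero_of_isUnit hPu
      have hudeg : u.natDegree = 0 := by omega
      exact hu (isUnit_of_natDegree_zero hu0 hudeg)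
    · have := natDegree_eq_zero_of_isUnit hQu
      have hvdeg : v.natDegree = 0 := by omega
      exact hv (isUnit_of_natDegree_zero hv0 hvdeg)

lemma dvd_slash {m : Polynomial F} (hm0 : m ≠ 0) {M : ℕ} (hdeg : m.natDegree = M)
    {lam : F} (hfix : slash α β γ δ M m = C lam * m)
    (hD : (C γ * X + C δ : Polynomial F) ≠ 0)
    {N : ℕ} {h : Polynomial F} (hdvd : m ∣ h) (hhN : h.natDegree ≤ N) :
    m ∣ slash α β γ δ N h := by
  obtain ⟨q, hq⟩ := hdvd
  by_cases hh0 : h = 0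
  · rw [hh0, slash_zero]
    exact dvd_zero m
  · have hq0 : q ≠ 0 := fun h0 => hh0 (by rw [hq, h0, mul_zero])
    have hMN : M + q.natDegree ≤ N := by
      rw [← hdeg, ← natDegree_mul hm0 hq0, ← hq]; exact hhN
    have hNeq : N = M + (N - M) := by omega
    rw [hq, hNeq, slash_mul α β γ δ hD M (N - M) m q hdeg.le (by omega)]
    rw [hfix]
    exact ⟨C lam * slash α β γ δ (N - M) q, by ring⟩

end SlashAux3

open SlashAux SlashAux3

/-- If `m` is monic of degree `M ≥ 1` with `m|_M B = λ·m` for some `λ ≠ 0`, then for `N ≥ 2`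
and `c` coprime to `m` with `deg c ≤ N`, the map `f ↦ f|_N B` is a bijection from the set of
(not necessarily monic) irreducible polynomials of degree `N` congruent to `c` mod `m` onto
the corresponding set for `c|_N B`; in particular the two sets have the same cardinality. -/
theorem slash_bijection {F : Type*} [Field F] [Fintype F] (α β γ δ : F)
    (hB : α * δ - β * γ ≠ 0) (m : Polynomial F) (M : ℕ) (hmonic : m.Monic)
    (hdeg : m.natDegree = M) (hM : 1 ≤ M) (lam : F) (hlam : lam ≠ 0)
    (hfix : slash α β γ δ M m = C lam * m) (N : ℕ) (hN : 2 ≤ N)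
    (c : Polynomial F) (hc : IsCoprime c m) (hcdeg : c.degree ≤ (N : ℕ)) :
    Set.BijOn (slash α β γ δ N)
      {f : Polynomial F | Irreducible f ∧ f.natDegree = N ∧ m ∣ f - c}
      {f : Polynomial F | Irreducible f ∧ f.natDegree = N ∧ m ∣ f - slash α β γ δ N c} ∧
    Nat.card {f : Polynomial F | Irreducible f ∧ f.natDegree = N ∧ m ∣ f - c} =
      Nat.card {f : Polynomial F | Irreducible f ∧ f.natDegree = N ∧
        m ∣ f - slash α β γ δ N c} := by

  classical
  have hDne : (C γ * X + C δ : Polynomial F) ≠ 0 :=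
    linear_ne_zero (fun ⟨h1, h2⟩ => hB (by rw [h1, h2]; ring))
  have hD'ne : (C (-γ) * X + C α : Polynomial F) ≠ 0 :=
    linear_ne_zero (fun ⟨h1, h2⟩ => hB (by rw [neg_eq_zero.mp h1, h2]; ring))
  have hB' : δ * α - (-β) * (-γ) ≠ 0 := fun h => hB (by linear_combination h)
  have hB'eq : δ * α - (-β) * (-γ) = α * δ - β * γ := by ring
  have hmne : m ≠ 0 := hmonic.ne_zero
  have hcN : c.natDegree ≤ N := natDegree_le_iff_degree_le.mpr hcdeg
  have hdetN : (α * δ - β * γ) ^ N ≠ 0 := pow_ne_zero _ hB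
  set e : F := ((α * δ - β * γ) ^ N)⁻¹ with he
  have hene : e ≠ 0 := inv_ne_zero hdetN
  have heC : C e * C ((α * δ - β * γ) ^ N) = (1 : Polynomial F) := by
    rw [← C_mul, he, inv_mul_cancel₀ hdetN, C_1]
  -- the fixed-polynomial identity for the adjugate matrix
  have h1 := slash_slash hB M m hdeg.le
  rw [hfix, slash_C_mul] at h1
  have hfix' : slash δ (-β) (-γ) α M m = C (lam⁻¹ * (α * δ - β * γ) ^ M) * m := by
    have h2 := congrArg (fun p => C lam⁻¹ * p) h1
    simp only [← mul_assoc, ← C_mul, inv_mul_cancel₀ hlam, C_1, one_mul] at h2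
    exact h2
  -- forward maps-to
  have hmapsF : Set.MapsTo (slash α β γ δ N)
      {f : Polynomial F | Irreducible f ∧ f.natDegree = N ∧ m ∣ f - c}
      {f : Polynomial F | Irreducible f ∧ f.natDegree = N ∧ m ∣ f - slash α β γ δ N c} := by
    rintro f ⟨hf_irr, hf_deg, hf_dvd⟩
    refine ⟨irreducible_slash hB hf_irr hf_deg hN,
      natDegree_slash_eq hB hf_irr hf_deg hN, ?_⟩
    rw [← slash_sub]
    exact dvd_slash hmne hdeg hfix hDne hf_dvd
      ((natDegree_sub_le f c).trans (max_le hf_deg.le hcN))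
  -- backward maps-to
  have hmapsB : Set.MapsTo (fun g => C e * slash δ (-β) (-γ) α N g)
      {f : Polynomial F | Irreducible f ∧ f.natDegree = N ∧ m ∣ f - slash α β γ δ N c}
      {f : Polynomial F | Irreducible f ∧ f.natDegree = N ∧ m ∣ f - c} := by
    rintro g ⟨hg_irr, hg_deg, hg_dvd⟩
    have hg_irr' : Irreducible (slash δ (-β) (-γ) α N g) :=
      irreducible_slash hB' hg_irr hg_deg hN
    have hg_deg' : (slash δ (-β) (-γ) α N g).natDegree = N :=
      natDegree_slash_eq hB' hg_irr hg_deg hN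
    have hassoc : Associated (slash δ (-β) (-γ) α N g) (C e * slash δ (-β) (-γ) α N g) :=
      ⟨(Polynomial.isUnit_C.mpr hene.isUnit).unit, mul_comm _ _⟩
    refine ⟨hassoc.irreducible hg_irr', ?_, ?_⟩
    · show (C e * slash δ (-β) (-γ) α N g).natDegree = N
      rw [natDegree_mul (fun h => hene (C_eq_zero.mp h)) hg_irr'.ne_zero, natDegree_C, zero_add,
        hg_deg']
    · show m ∣ C e * slash δ (-β) (-γ) α N g - c
      have hkey : slash δ (-β) (-γ) α N (slash α β γ δ N c) = C ((α * δ - β * γ) ^ N) * c :=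
        slash_slash hB N c hcN
      have hrw : C e * slash δ (-β) (-γ) α N g - c =
          C e * slash δ (-β) (-γ) α N (g - slash α β γ δ N c) := by
        rw [slash_sub, hkey, mul_sub, ← mul_assoc, heC, one_mul]
      rw [hrw]
      refine Dvd.dvd.mul_left ?_ _
      exact dvd_slash hmne hdeg hfix' hD'ne hg_dvd
        ((natDegree_sub_le g _).trans (max_le hg_deg.le (natDegree_slash_le α β γ δ N c)))
  -- inverse identities
  have hleft : ∀ f ∈ {f : Polynomial F | Irreducible f ∧ f.natDegree = N ∧ m ∣ f - c},
      C e * slash δ (-β) (-γ) α N (slash α β γ δ N f) = f := by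
    rintro f ⟨hf_irr, hf_deg, -⟩
    rw [slash_slash hB N f hf_deg.le, ← mul_assoc, heC, one_mul]
  have hright : ∀ g ∈ {f : Polynomial F | Irreducible f ∧ f.natDegree = N ∧
      m ∣ f - slash α β γ δ N c}, slash α β γ δ N (C e * slash δ (-β) (-γ) α N g) = g := by
    rintro g ⟨hg_irr, hg_deg, -⟩
    have h3 := slash_slash hB' N g hg_deg.le
    simp only [neg_neg, hB'eq] at h3
    rw [slash_C_mul, h3, ← mul_assoc, heC, one_mul]
  have hinv : Set.InvOn (fun g => C e * slash δ (-β) (-γ) α N g) (slash α β γ δ N)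
      {f : Polynomial F | Irreducible f ∧ f.natDegree = N ∧ m ∣ f - c}
      {f : Polynomial F | Irreducible f ∧ f.natDegree = N ∧ m ∣ f - slash α β γ δ N c} :=
    ⟨hleft, hright⟩
  have hbij := hinv.bijOn hmapsF hmapsB
  exact ⟨hbij, Nat.card_congr (Set.BijOn.equiv _ hbij)⟩
end

section
/- Let F be a finite field, let α, β, γ, δ ∈ F with αδ − βγ ≠ 0, and let m ∈ F[T] be a monic polynomial of degree M ≥ 1 such that (m|_M B)(T) = λ·m(T) for some nonzero λ ∈ F, where B = (α, β; γ, δ), and such that the residue of γT + δ is a unit in F[T]/(m). Let k be the multiplicative order of the residue of γT + δ in (F[T]/(m))^×, and let c ∈ F[T] be coprime to m. Then for all integers n ≥ deg c, the polynomial c|_{n+k} B is congruent to c|_n B modulo m; that is, the sequence n ↦ (c|_n B mod m) is periodic with period k. -/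
open Polynomial

lemma slash_add_aux {F : Type*} [Field F] (α β γ δ : F) (n k : ℕ) (c : Polynomial F)
    (hn : c.natDegree ≤ n) :
    slash α β γ δ (n + k) c = (C γ * X + C δ) ^ k * slash α β γ δ n c := by
  unfold slash
  rw [Finset.mul_sum]
  rw [← Finset.sum_subset (Finset.range_subset_range.mpr (by omega) :
      Finset.range (n + 1) ⊆ Finset.range (n + k + 1))]
  · apply Finset.sum_congr rfl
    intro i hi
    have h1 : i ≤ n := Nat.lt_succ_iff.mp (Finset.mem_range.mp hi)
    have h2 : n + k - i = (n - i) + k := by omega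
    rw [h2, pow_add]; ring
  · intro i hi hin
    have h1 := Finset.mem_range.mp hi
    have h2 : ¬ i < n + 1 := fun h => hin (Finset.mem_range.mpr h)
    have : c.coeff i = 0 := coeff_eq_zero_of_natDegree_lt (by omega)
    simp [this]

/-- If `m` is monic of degree `M ≥ 1` with `m|_M B = λ·m` for some `λ ≠ 0`, the residue of
`γT + δ` is a unit in `F[T]/(m)` of multiplicative order `k`, and `c` is coprime to `m`, then
for all `n ≥ deg c` we have `c|_{n+k} B ≡ c|_n B (mod m)`: the sequence `n ↦ c|_n B mod m`
is periodic with period `k`. -/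
theorem slash_periodic_mod {F : Type*} [Field F] [Fintype F] (α β γ δ : F)
    (hB : α * δ - β * γ ≠ 0) (m : Polynomial F) (M : ℕ) (hmonic : m.Monic)
    (hdeg : m.natDegree = M) (hM : 1 ≤ M) (lam : F) (hlam : lam ≠ 0)
    (hfix : slash α β γ δ M m = C lam * m)
    (hu : IsUnit ((Ideal.Quotient.mk (Ideal.span {m})) (C γ * X + C δ)))
    (k : ℕ) (hk : k = orderOf hu.unit)
    (c : Polynomial F) (hc : IsCoprime c m) :
    ∀ n : ℕ, c.natDegree ≤ n →
      m ∣ slash α β γ δ (n + k) c - slash α β γ δ n c := by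
  intro n hn
  rw [slash_add_aux α β γ δ n k c hn]
  have key : m ∣ (C γ * X + C δ) ^ k - 1 := by
    rw [← Ideal.Quotient.eq_zero_iff_dvd]
    rw [map_sub, map_pow, map_one, sub_eq_zero]
    have : (Ideal.Quotient.mk (Ideal.span {m})) (C γ * X + C δ) = ↑hu.unit := by
      simp
    rw [this, ← Units.val_pow_eq_pow_val, hk, pow_orderOf_eq_one, Units.val_one]
  have : (C γ * X + C δ) ^ k * slash α β γ δ n c - slash α β γ δ n c
      = ((C γ * X + C δ) ^ k - 1) * slash α β γ δ n c := by ring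
  rw [this]
  exact key.mul_right _
end

section
/- Let F₂ be the field with two elements, let α, β, γ, δ ∈ F₂ with αδ − βγ ≠ 0 (i.e., B = (α, β; γ, δ) ∈ GL₂(F₂)), let N ≥ 2, and let f ∈ F₂[T] be an irreducible polynomial of degree N. Then the coefficient of T^N in f|_N B equals 1; in particular f|_N B is a monic polynomial of degree N. -/
open Polynomial

lemma linear_natDegree_le {F : Type*} [Field F] (a b : F) :
    (C a * X + C b).natDegree ≤ 1 := by
  apply le_trans (Polynomial.natDegree_add_le _ _)
  simp only [Polynomial.natDegree_C, max_le_iff]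
  exact ⟨le_trans (Polynomial.natDegree_C_mul_le a X) Polynomial.natDegree_X_le, Nat.zero_le 1⟩

lemma linear_pow_natDegree_le {F : Type*} [Field F] (a b : F) (i : ℕ) :
    ((C a * X + C b) ^ i).natDegree ≤ i := by
  refine le_trans Polynomial.natDegree_pow_le ?_
  have := Nat.mul_le_mul_left i (linear_natDegree_le a b)
  simpa using this

lemma slash_coeff_top {F : Type*} [Field F] (α β γ δ : F) (n : ℕ) (f : Polynomial F) :
    (slash α β γ δ n f).coeff n =
      ∑ i ∈ Finset.range (n + 1), f.coeff i * α ^ i * γ ^ (n - i) := by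
  unfold slash
  rw [Polynomial.finset_sum_coeff]
  apply Finset.sum_congr rfl
  intro i hi
  rw [Finset.mem_range, Nat.lt_succ_iff] at hi
  have h1 : ((C α * X + C β) ^ i).natDegree ≤ i := linear_pow_natDegree_le α β i
  have h2 : ((C γ * X + C δ) ^ (n - i)).natDegree ≤ n - i := linear_pow_natDegree_le γ δ (n - i)
  have hc1 : ((C α * X + C β) ^ i).coeff i = α ^ i := by
    have := Polynomial.coeff_pow_of_natDegree_le (p := C α * X + C β) (m := i)
      (n := 1) (linear_natDegree_le α β)
    rw [mul_one] at this
    rw [this]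
    simp
  have hc2 : ((C γ * X + C δ) ^ (n - i)).coeff (n - i) = γ ^ (n - i) := by
    have := Polynomial.coeff_pow_of_natDegree_le (p := C γ * X + C δ) (m := n - i)
      (n := 1) (linear_natDegree_le γ δ)
    rw [mul_one] at this
    rw [this]
    simp
  have key := Polynomial.coeff_mul_add_eq_of_natDegree_le h1 h2
  rw [Nat.add_sub_cancel' hi] at key
  rw [mul_assoc, Polynomial.coeff_C_mul, key, hc1, hc2, mul_assoc]

lemma slash_natDegree_le {F : Type*} [Field F] (α β γ δ : F) (n : ℕ) (f : Polynomial F) :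
    (slash α β γ δ n f).natDegree ≤ n := by
  unfold slash
  apply Polynomial.natDegree_sum_le_of_forall_le
  intro i hi
  rw [Finset.mem_range, Nat.lt_succ_iff] at hi
  refine le_trans Polynomial.natDegree_mul_le ?_
  have hA : (C (f.coeff i) * (C α * X + C β) ^ i).natDegree ≤ i :=
    le_trans (Polynomial.natDegree_C_mul_le _ _) (linear_pow_natDegree_le α β i)
  have hC := linear_pow_natDegree_le γ δ (n - i)
  omega

lemma no_root_of_irreducible {F : Type*} [Field F] (f : Polynomial F)
    (hf : Irreducible f) (hdeg : 2 ≤ f.natDegree) (a : F) : f.eval a ≠ 0 := by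
  intro h
  have hdvd : (X - C a) ∣ f := Polynomial.dvd_iff_isRoot.mpr h
  obtain ⟨g, hg⟩ := hdvd
  rcases hf.isUnit_or_isUnit hg with hu | hu
  · exact Polynomial.not_isUnit_X_sub_C a hu
  · have : f.natDegree = 1 := by
      rw [hg, Polynomial.natDegree_mul (Polynomial.X_sub_C_ne_zero a)
        (fun h0 => by simp [h0] at hu),
        Polynomial.natDegree_X_sub_C, Polynomial.natDegree_eq_zero_of_isUnit hu]
    omega

/-- Over `F₂`, for `B ∈ GL₂(F₂)`, `N ≥ 2` and `f` irreducible of degree `N`, the coefficient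
of `T^N` in `f|_N B` is `1`; in particular `f|_N B` is monic of degree `N`. -/
theorem slash_monic_over_F2 (α β γ δ : ZMod 2) (hB : α * δ - β * γ ≠ 0)
    (N : ℕ) (hN : 2 ≤ N) (f : Polynomial (ZMod 2)) (hf : Irreducible f)
    (hfdeg : f.natDegree = N) :
    (slash α β γ δ N f).coeff N = 1 ∧ (slash α β γ δ N f).Monic ∧
      (slash α β γ δ N f).natDegree = N := by
  have hdeg2 : 2 ≤ f.natDegree := hfdeg ▸ hN
  have htwo : ∀ x : ZMod 2, x = 0 ∨ x = 1 := by decide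
  have hcoeff : (slash α β γ δ N f).coeff N = 1 := by
    rw [slash_coeff_top]
    rcases htwo γ with hγ | hγ
    · -- γ = 0, so α = 1 from det condition
      subst hγ
      have hα : α = 1 := by
        rcases htwo α with h | h
        · exfalso; apply hB; rw [h]; ring
        · exact h
      subst hα
      have hsum : ∀ i ∈ Finset.range (N + 1),
          f.coeff i * (1 : ZMod 2) ^ i * (0 : ZMod 2) ^ (N - i) =
            if i = N then f.coeff N else 0 := by
        intro i hi
        rw [Finset.mem_range, Nat.lt_succ_iff] at hi
        by_cases h : i = N
        · subst h; simp
        · have hlt : 0 < N - i := by omega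
          simp [zero_pow (by omega : N - i ≠ 0), h]
      rw [Finset.sum_congr rfl hsum, Finset.sum_ite_eq' _ N,
        if_pos (Finset.self_mem_range_succ N)]
      have hne : f.coeff N ≠ 0 := by
        rw [← hfdeg]
        exact Polynomial.leadingCoeff_ne_zero.mpr hf.ne_zero
      rcases htwo (f.coeff N) with h | h
      · exact absurd h hne
      · exact h
    · -- γ = 1
      subst hγ
      have heq : ∑ i ∈ Finset.range (N + 1), f.coeff i * α ^ i * (1 : ZMod 2) ^ (N - i)
          = f.eval α := by
        rw [Polynomial.eval_eq_sum_range' (by omega : f.natDegree < N + 1)]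
        apply Finset.sum_congr rfl
        intro i _
        rw [one_pow, mul_one]
      rw [heq]
      have hne := no_root_of_irreducible f hf hdeg2 α
      rcases htwo (f.eval α) with h | h
      · exact absurd h hne
      · exact h
  have hle := slash_natDegree_le α β γ δ N f
  have hnd : (slash α β γ δ N f).natDegree = N := by
    by_contra h
    have hlt : (slash α β γ δ N f).natDegree < N := lt_of_le_of_ne hle h
    have := Polynomial.coeff_eq_zero_of_natDegree_lt hlt
    rw [hcoeff] at this
    exact one_ne_zero this
  refine ⟨hcoeff, ?_, hnd⟩
  rw [Polynomial.Monic, Polynomial.leadingCoeff, hnd, hcoeff]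
end

section
/- Let F₂ be the field with two elements and let m = T² + T + 1 ∈ F₂[T]. For every integer N ≥ 2 that is not divisible by 3, π(N; m, 1) = π(N; m, T) = π(N; m, T + 1). -/
open Polynomial

/-- `π(N; m, c)`: the number of monic irreducible polynomials `f ∈ F[T]` of degree `N`
such that `m` divides `f − c`. -/
noncomputable def primeCount {F : Type*} [Field F] (N : ℕ) (m c : Polynomial F) : ℕ :=
  Nat.card {f : Polynomial F // f.Monic ∧ Irreducible f ∧ f.natDegree = N ∧ m ∣ f - c}

namespace TiesAux

abbrev K := ZMod 2

local notation "m" => (X^2 + X + 1 : K[X])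

lemma two_eq : (2 : K[X]) = 0 := by
  have h : ((2:ℕ) : K[X]) = 0 := CharP.cast_eq_zero _ _
  exact_mod_cast h

lemma m_comp : (m).comp (X+1) = m := by
  simp only [add_comp, pow_comp, X_comp, one_comp]
  linear_combination (X+1 : K[X]) * two_eq

lemma m_dvd_comp {p : K[X]} (h : m ∣ p) : m ∣ p.comp (X+1) := by
  obtain ⟨e, rfl⟩ := h
  exact ⟨e.comp (X+1), by rw [mul_comp, m_comp]⟩

lemma comp_comp (f : K[X]) : (f.comp (X+1)).comp (X+1) = f := by
  rw [comp_assoc]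
  simp only [add_comp, X_comp, one_comp]
  rw [show (X + 1 + 1 : K[X]) = X by linear_combination (1:K[X]) * two_eq, comp_X]

lemma reflect_invol (N : ℕ) (f : K[X]) : reflect N (reflect N f) = f := by
  ext i; simp

lemma m_dvd_pow_mul (i : ℕ) : m ∣ (X*(X+1))^i - 1 := by
  have h := sub_dvd_pow_sub_pow (X*(X+1) : K[X]) 1 i
  rw [one_pow] at h
  exact dvd_trans ⟨1, by linear_combination -two_eq⟩ h

lemma key_term (N i : ℕ) (h : i ≤ N) (a : K) :
    m ∣ X^N * (C a * (X+1)^i) - C a * X^(N - i) := by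
  obtain ⟨k, rfl⟩ := Nat.le.dest h
  have : X^(i+k) * (C a * (X+1)^i) - C a * X^(i+k-i)
      = (C a * X^k) * ((X*(X+1))^i - 1) := by
    rw [Nat.add_sub_cancel_left, pow_add, mul_pow]
    ring
  rw [this]
  exact Dvd.dvd.mul_left (m_dvd_pow_mul i) _

lemma key (N : ℕ) (f : K[X]) (hf : f.natDegree ≤ N) :
    m ∣ X^N * f.comp (X+1) - reflect N f := by
  conv_rhs => rw [Polynomial.as_sum_range' f (N+1) (Nat.lt_succ_of_le hf)]
  set R : K[X] →+ K[X] := AddMonoidHom.mk' (reflect N) (fun a b => reflect_add a b N) with hR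
  have hRapp : ∀ p : K[X], reflect N p = R p := fun _ => rfl
  rw [hRapp, map_sum]
  have hcomp : (∑ i ∈ Finset.range (N+1), (monomial i (f.coeff i) : K[X])).comp (X+1)
      = ∑ i ∈ Finset.range (N+1), ((monomial i (f.coeff i) : K[X])).comp (X+1) := by
    simp only [comp, eval₂_finset_sum]
  rw [hcomp, Finset.mul_sum, ← Finset.sum_sub_distrib]
  refine Finset.dvd_sum fun i hi => ?_
  have hiN : i ≤ N := Nat.lt_succ_iff.mp (Finset.mem_range.mp hi)
  rw [← C_mul_X_pow_eq_monomial, ← hRapp, reflect_C_mul_X_pow, revAt_le hiN]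
  have : (C (f.coeff i) * X ^ i : K[X]).comp (X+1) = C (f.coeff i) * (X+1)^i := by
    simp [mul_comp, C_comp, pow_comp, X_comp]
  rw [this]
  exact key_term N i hiN _

lemma m_dvd_X3 : m ∣ (X:K[X])^3 - 1 :=
  ⟨X+1, by linear_combination (-(X^2+X+1) : K[X]) * two_eq⟩

lemma pow_mod (n : ℕ) : m ∣ (X:K[X])^n - X^(n % 3) := by
  have h1 : (X:K[X])^n = X^(n%3) * (X^3)^(n/3) := by
    rw [← pow_mul, ← pow_add, Nat.mod_add_div]
  have h2 : m ∣ ((X:K[X])^3)^(n/3) - 1 :=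
    dvd_trans m_dvd_X3 (by simpa using sub_dvd_pow_sub_pow ((X:K[X])^3) 1 (n/3))
  have h3 : (X:K[X])^n - X^(n%3) = X^(n%3) * (((X:K[X])^3)^(n/3) - 1) := by
    rw [h1]; ring
  exact h3 ▸ h2.mul_left _

lemma isUnit_of_reflect {a : K[X]} (h : IsUnit (reflect a.natDegree a)) (h0 : a.coeff 0 ≠ 0) :
    IsUnit a := by
  obtain ⟨r, hr, hCr⟩ := Polynomial.isUnit_iff.mp h
  have ha : a = C r * X ^ a.natDegree := by
    conv_lhs => rw [← reflect_invol a.natDegree a]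
    rw [← hCr, reflect_C]
  have hda : a.natDegree = 0 := by
    by_contra hda
    apply h0
    rw [ha]
    simp [coeff_X_pow, Ne.symm hda]
  rw [ha, hda, pow_zero, mul_one]
  exact isUnit_C.mpr hr

lemma reflect_mem {N : ℕ} (hN : 2 ≤ N) {c c' f : K[X]}
    (hc : m ∣ X^N * c.comp (X+1) - c')
    (hf : f.Monic ∧ Irreducible f ∧ f.natDegree = N ∧ m ∣ f - c) :
    (reflect N f).Monic ∧ Irreducible (reflect N f) ∧ (reflect N f).natDegree = N ∧
      m ∣ reflect N f - c' := by
  obtain ⟨hmo, hirr, hdeg, hdvd⟩ := hf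
  have hf0 : f ≠ 0 := hirr.ne_zero
  -- constant coefficient of f is 1
  have h00 : f.coeff 0 ≠ 0 := by
    intro h0
    obtain ⟨g, hg⟩ := (X_dvd_iff).mpr h0
    rcases hirr.isUnit_or_isUnit hg with h | h
    · exact Polynomial.not_isUnit_X h
    · have hg0 : g ≠ 0 := fun h' => hf0 (by rw [hg, h', mul_zero])
      have := natDegree_mul (X_ne_zero (R := K)) hg0
      rw [← hg, natDegree_X, natDegree_eq_zero_of_isUnit h] at this
      omega
  have h01 : f.coeff 0 = 1 := by
    have : ∀ a : K, a ≠ 0 → a = 1 := by decide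
    exact this _ h00
  -- degree and monicity of the reflect
  have hle : (reflect N f).natDegree ≤ N := by
    refine natDegree_le_iff_coeff_eq_zero.mpr fun i hi => ?_
    rw [coeff_reflect, revAt_eq_self_of_lt hi]
    exact coeff_eq_zero_of_natDegree_lt (by omega)
  have hcN : (reflect N f).coeff N = 1 := by
    rw [coeff_reflect, revAt_le le_rfl, Nat.sub_self, h01]
  have hmon : (reflect N f).Monic := monic_of_natDegree_le_of_coeff_eq_one N hle hcN
  have hdeg' : (reflect N f).natDegree = N :=
    le_antisymm hle (le_natDegree_of_ne_zero (by rw [hcN]; exact one_ne_zero))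
  -- coefficient 0 of reflect is 1
  have hr0 : (reflect N f).coeff 0 = 1 := by
    rw [coeff_reflect, revAt_le (Nat.zero_le N), Nat.sub_zero, ← hdeg]
    exact hmo.coeff_natDegree
  -- irreducibility
  have hrne : reflect N f ≠ 0 := by
    rw [Ne, reflect_eq_zero_iff]; exact hf0
  have hirr' : Irreducible (reflect N f) := by
    constructor
    · exact Polynomial.not_isUnit_of_natDegree_pos _ (by omega)
    · intro a b hab
      have ha0 : a ≠ 0 := fun h => hrne (by rw [hab, h, zero_mul])
      have hb0 : b ≠ 0 := fun h => hrne (by rw [hab, h, mul_zero])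
      have hdd : a.natDegree + b.natDegree = N := by
        have := natDegree_mul ha0 hb0
        rw [← hab, hdeg'] at this
        omega
      have hfprod : f = reflect a.natDegree a * reflect b.natDegree b := by
        rw [← reflect_mul a b le_rfl le_rfl, hdd, ← hab, reflect_invol]
      have hab0 : a.coeff 0 * b.coeff 0 = 1 := by
        rw [← mul_coeff_zero, ← hab, hr0]
      rcases hirr.isUnit_or_isUnit hfprod with h | h
      · exact Or.inl (isUnit_of_reflect h (left_ne_zero_of_mul_eq_one hab0))
      · exact Or.inr (isUnit_of_reflect h (right_ne_zero_of_mul_eq_one hab0))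
  refine ⟨hmon, hirr', hdeg', ?_⟩
  -- divisibility
  have d1 := key N f (le_of_eq hdeg)
  have d2 : m ∣ (f - c).comp (X+1) := m_dvd_comp hdvd
  have heq : reflect N f - c'
      = X^N * ((f - c).comp (X+1)) + (X^N * c.comp (X+1) - c')
        - (X^N * f.comp (X+1) - reflect N f) := by
    rw [sub_comp]; ring
  rw [heq]
  exact dvd_sub (dvd_add (d2.mul_left _) hc) d1

lemma count_reflect {N : ℕ} (hN : 2 ≤ N) {c c' : K[X]}
    (hc : m ∣ X^N * c.comp (X+1) - c') (hc' : m ∣ X^N * c'.comp (X+1) - c) :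
    primeCount N m c = primeCount N m c' :=
  Nat.card_congr
    { toFun := fun f => ⟨reflect N f.1, reflect_mem hN hc f.2⟩
      invFun := fun f => ⟨reflect N f.1, reflect_mem hN hc' f.2⟩
      left_inv := fun f => Subtype.ext (reflect_invol N f.1)
      right_inv := fun f => Subtype.ext (reflect_invol N f.1) }

lemma isUnit_comp {p : K[X]} (h : IsUnit p) : IsUnit (p.comp (X+1)) := by
  obtain ⟨r, hr, rfl⟩ := Polynomial.isUnit_iff.mp h
  simpa [C_comp] using isUnit_C.mpr hr

lemma comp_mem {N : ℕ} {c f : K[X]}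
    (hf : f.Monic ∧ Irreducible f ∧ f.natDegree = N ∧ m ∣ f - c) :
    (f.comp (X+1)).Monic ∧ Irreducible (f.comp (X+1)) ∧ (f.comp (X+1)).natDegree = N ∧
      m ∣ f.comp (X+1) - c.comp (X+1) := by
  obtain ⟨hmo, hirr, hdeg, hdvd⟩ := hf
  have hq : (X + 1 : K[X]).Monic := by
    simpa using monic_X_add_C (1 : K)
  have hqd : (X + 1 : K[X]).natDegree = 1 := by
    simpa using natDegree_X_add_C (1 : K)
  refine ⟨hmo.comp hq (by omega), ?_, ?_, ?_⟩
  · constructor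
    · intro h
      exact hirr.not_isUnit (by simpa [comp_comp] using isUnit_comp h)
    · intro a b hab
      have : f = a.comp (X+1) * b.comp (X+1) := by
        rw [← mul_comp, ← hab, comp_comp]
      rcases hirr.isUnit_or_isUnit this with h | h
      · exact Or.inl (by simpa [comp_comp] using isUnit_comp h)
      · exact Or.inr (by simpa [comp_comp] using isUnit_comp h)
  · rw [natDegree_comp, hqd, hdeg, mul_one]
  · rw [← sub_comp]
    exact m_dvd_comp hdvd

lemma count_comp (N : ℕ) (c : K[X]) :
    primeCount N m c = primeCount N m (c.comp (X+1)) :=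
  Nat.card_congr
    { toFun := fun f => ⟨f.1.comp (X+1), comp_mem f.2⟩
      invFun := fun f => ⟨f.1.comp (X+1), by
        have := comp_mem f.2
        rwa [comp_comp c] at this⟩
      left_inv := fun f => Subtype.ext (comp_comp f.1)
      right_inv := fun f => Subtype.ext (comp_comp f.1) }

end TiesAux

open TiesAux

/-- For `m = T² + T + 1 ∈ F₂[T]` and every `N ≥ 2` not divisible by `3`,
`π(N; m, 1) = π(N; m, T) = π(N; m, T + 1)`. -/
theorem ties_T2T1_N_not_mult_three (N : ℕ) (hN : 2 ≤ N) (h3 : ¬ 3 ∣ N) :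
    primeCount N (X ^ 2 + X + 1 : Polynomial (ZMod 2)) 1
        = primeCount N (X ^ 2 + X + 1 : Polynomial (ZMod 2)) X ∧
      primeCount N (X ^ 2 + X + 1 : Polynomial (ZMod 2)) X
        = primeCount N (X ^ 2 + X + 1 : Polynomial (ZMod 2)) (X + 1) := by
  have hXc : (X : K[X]).comp (X + 1) = X + 1 := X_comp
  have e2 : primeCount N (X^2 + X + 1 : K[X]) X
      = primeCount N (X^2 + X + 1 : K[X]) (X + 1) := by
    have := count_comp N (X : K[X])
    rwa [hXc] at this
  refine ⟨?_, e2⟩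
  have hr : N % 3 = 1 ∨ N % 3 = 2 := by omega
  rcases hr with hr | hr
  · -- N ≡ 1 : reflect swaps classes 1 and X
    refine count_reflect hN ?_ ?_
    · rw [one_comp, mul_one]
      have := pow_mod N
      rwa [hr, pow_one] at this
    · rw [hXc]
      have h1 := pow_mod N
      rw [hr, pow_one] at h1
      have : (X:K[X])^N * (X+1) - 1
          = ((X:K[X])^N - X) * (X+1) + (X*(X+1) - 1) := by ring
      rw [this]
      exact dvd_add (h1.mul_right _) ⟨1, by linear_combination -two_eq⟩
  · -- N ≡ 2 : reflect swaps classes 1 and X+1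
    have e1 : primeCount N (X^2 + X + 1 : K[X]) 1
        = primeCount N (X^2 + X + 1 : K[X]) (X + 1) := by
      refine count_reflect hN ?_ ?_
      · rw [one_comp, mul_one]
        have h1 := pow_mod N
        rw [hr] at h1
        have : (X:K[X])^N - (X+1) = ((X:K[X])^N - X^2) + (X^2 - (X+1)) := by ring
        rw [this]
        exact dvd_add h1 ⟨1, by linear_combination (-(X+1):K[X]) * two_eq⟩
      · have hX1c : (X + 1 : K[X]).comp (X + 1) = X := by
          simp only [add_comp, X_comp, one_comp]
          linear_combination (1:K[X]) * two_eq
        rw [hX1c]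
        have h1 := pow_mod (N + 1)
        rw [show (N+1) % 3 = 0 by omega, pow_zero] at h1
        have : (X:K[X])^N * X - 1 = X^(N+1) - 1 := by rw [pow_succ]
        rw [this]
        exact h1
    rw [e1, e2]
end

section
/- Let F₂ be the field with two elements and let m = T² + T + 1 ∈ F₂[T]. For every positive integer N divisible by 3, π(N; m, T) = π(N; m, T + 1). -/
open Polynomial

/-- For `m = T² + T + 1 ∈ F₂[T]` and every positive `N` divisible by `3`,
`π(N; m, T) = π(N; m, T + 1)`. -/
theorem ties_T2T1_N_mult_three (N : ℕ) (hN : 0 < N) (h3 : 3 ∣ N) :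
    primeCount N (X ^ 2 + X + 1 : Polynomial (ZMod 2)) X
      = primeCount N (X ^ 2 + X + 1 : Polynomial (ZMod 2)) (X + 1) := by
  unfold primeCount
  set e := algEquivAevalXAddC (1 : ZMod 2) with he
  have hm : e (X ^ 2 + X + 1) = X ^ 2 + X + 1 := by
    simp only [he, algEquivAevalXAddC_apply, map_add, map_one, map_pow, aeval_X]
    have h2 : (2 : (ZMod 2)[X]) = 0 := by
      exact_mod_cast CharP.cast_eq_zero ((ZMod 2)[X]) 2
    ring_nf
    linear_combination (X + 1 : (ZMod 2)[X]) * h2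
  have hX : e X = X + 1 := by
    simp [he, algEquivAevalXAddC_apply]
  refine Nat.card_eq_of_bijective (fun f => ⟨e f.1, ?_⟩) ?_
  · obtain ⟨f, hmon, hirr, hdeg, hdvd⟩ := f
    refine ⟨?_, ?_, ?_, ?_⟩
    · simpa [he, algEquivAevalXAddC_apply, comp_eq_aeval] using hmon.comp_X_add_C 1
    · exact (MulEquiv.irreducible_iff e.toMulEquiv).mpr hirr
    · rw [he, algEquivAevalXAddC_apply, ← comp_eq_aeval, natDegree_comp]
      rw [natDegree_X_add_C, mul_one, hdeg]
    · have := map_dvd e hdvd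
      rwa [map_sub, hm, hX] at this
  · constructor
    · intro a b hab
      apply Subtype.ext
      exact e.injective (congrArg Subtype.val hab)
    · rintro ⟨g, hmon, hirr, hdeg, hdvd⟩
      refine ⟨⟨e.symm g, ?_, ?_, ?_, ?_⟩, Subtype.ext (e.apply_symm_apply g)⟩
      · simpa [he, algEquivAevalXAddC_symm, algEquivAevalXAddC_apply,
          show (-1 : ZMod 2) = 1 by decide, comp_eq_aeval] using hmon.comp_X_add_C (-1 : ZMod 2)
      · exact (MulEquiv.irreducible_iff e.symm.toMulEquiv).mpr hirr
      · rw [he, algEquivAevalXAddC_symm, algEquivAevalXAddC_apply, ← comp_eq_aeval,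
          natDegree_comp]
        rw [natDegree_X_add_C, mul_one, hdeg]
      · have := map_dvd e.symm hdvd
        have hm' : e.symm (X ^ 2 + X + 1) = X ^ 2 + X + 1 := by
          apply e.injective
          rw [e.apply_symm_apply, hm]
        have hX' : e.symm (X + 1) = X := by
          apply e.injective
          rw [e.apply_symm_apply, hX]
        rwa [map_sub, hm', hX'] at this
end

section
/- Let F₂ be the field with two elements and let m = T³ + T + 1 ∈ F₂[T]. Let N ≥ 2 be an integer not divisible by 7, and let e ∈ {1, 2, 3, 4, 5, 6} with N ≡ e (mod 7). Then π(N; m, 1) = π(N; m, T^e) = π(N; m, T^{3e}) and π(N; m, T^{2e}) = π(N; m, T^{4e}) = π(N; m, T^{5e}). -/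
open Polynomial

namespace TiesAux

noncomputable section

abbrev F := ZMod 2

def mpoly : F[X] := X ^ 3 + X + 1

lemma two_poly : (2 : F[X]) = 0 := by
  have h := map_ofNat (C : F →+* F[X]) 2
  rw [← h, show (2 : F) = 0 by decide, map_zero]

lemma mpoly_natDegree : mpoly.natDegree = 3 := by
  unfold mpoly; compute_degree!

lemma mpoly_irred : Irreducible mpoly := by
  rw [irreducible_iff_roots_eq_zero_of_degree_le_three (by rw [mpoly_natDegree]; norm_num)
    (by rw [mpoly_natDegree])]
  rw [Multiset.eq_zero_iff_forall_notMem]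
  intro a ha
  have h0 : mpoly ≠ 0 := by
    intro h; have := mpoly_natDegree; rw [h] at this; simp at this
  rw [mem_roots h0] at ha
  have hall : ∀ b : F, b ^ 3 + b + 1 ≠ 0 := by decide
  exact hall a (by simpa [mpoly, IsRoot] using ha)

def Iq : Ideal F[X] := Ideal.span {mpoly}

abbrev Rq := F[X] ⧸ Iq

def t : Rq := Ideal.Quotient.mk Iq X

lemma mk_eq_aeval (p : F[X]) : Ideal.Quotient.mk Iq p = aeval t p := by
  have h := Polynomial.aeval_algHom_apply (Ideal.Quotient.mkₐ F Iq) X p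
  rw [aeval_X_left_apply, Ideal.Quotient.mkₐ_eq_mk] at h
  exact h.symm

lemma h2R : (2 : Rq) = 0 := by
  have : ((2 : F[X]) : Rq) = Ideal.Quotient.mk Iq (2 : F[X]) := rfl
  have h := congrArg (Ideal.Quotient.mk Iq) two_poly
  rw [map_zero] at h
  calc (2 : Rq) = Ideal.Quotient.mk Iq (2 : F[X]) := by
        rw [map_ofNat]
    _ = 0 := h

lemma hm0 : aeval t mpoly = 0 := by
  rw [← mk_eq_aeval, Ideal.Quotient.eq_zero_iff_mem]
  exact Ideal.subset_span rfl

lemma hm0' : t ^ 3 + t + 1 = 0 := by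
  have := hm0; simpa [mpoly] using this

lemma h31 : t ^ 3 = t + 1 := by
  linear_combination hm0' - (t + 1) * h2R

lemma h7t : t ^ 7 = 1 := by
  linear_combination (t^4 + t^2 + t + 1) * hm0' - (t^5 + t^4 + t^3 + t^2 + t + 1) * h2R

lemma h62 : t ^ 6 + 1 = t ^ 2 := by
  linear_combination (t^3 - t - 1) * hm0' + (t + 1) * h2R

lemma tpow_mod (c : ℕ) : t ^ c = t ^ (c % 7) := by
  conv_lhs => rw [← Nat.div_add_mod c 7]
  rw [pow_add, pow_mul, h7t, one_pow, one_mul]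

lemma dvd_iff_aeval (p c : F[X]) : mpoly ∣ p - c ↔ aeval t p = aeval t c := by
  rw [← Ideal.mem_span_singleton (α := F[X]), ← Iq, ← Ideal.Quotient.eq,
    mk_eq_aeval, mk_eq_aeval]

lemma dvd_pow_iff (p : F[X]) (a : ℕ) : mpoly ∣ p - X ^ a ↔ aeval t p = t ^ a := by
  rw [dvd_iff_aeval, map_pow, aeval_X, t]

lemma aeval_sq (u : Rq) (p : F[X]) : aeval (u ^ 2) p = (aeval u p) ^ 2 := by
  induction p using Polynomial.induction_on' with
  | add p q hp hq =>
      rw [map_add, map_add, hp, hq]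
      linear_combination (-(aeval u p) * (aeval u q)) * h2R
  | monomial n a =>
      rw [aeval_monomial, aeval_monomial]
      have ha2 : a ^ 2 = a := by revert a; decide
      rw [mul_pow, ← map_pow, ha2, ← pow_mul, ← pow_mul, Nat.mul_comm 2 n]


lemma no_linear_factor {p : F[X]} (hi : Irreducible p) (h2 : 2 ≤ p.natDegree)
    {d : F[X]} (hd : d.natDegree = 1) : ¬ d ∣ p := by
  rintro ⟨q, rfl⟩
  have hq0 : q ≠ 0 := by rintro rfl; simp at h2
  have hd0 : d ≠ 0 := by rintro rfl; simp at hd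
  rcases hi.isUnit_or_isUnit rfl with h' | h'
  · rw [natDegree_eq_zero_of_isUnit h'] at hd; exact absurd hd (by norm_num)
  · rw [natDegree_mul hd0 hq0, hd, natDegree_eq_zero_of_isUnit h'] at h2; omega

lemma coeff_zero_ne {p : F[X]} (hi : Irreducible p) (h2 : 2 ≤ p.natDegree) :
    p.coeff 0 ≠ 0 := fun h =>
  no_linear_factor hi h2 natDegree_X (X_dvd_iff.mpr h)

lemma eval_one_ne {p : F[X]} (hi : Irreducible p) (h2 : 2 ≤ p.natDegree) :
    p.eval 1 ≠ 0 := fun h =>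
  no_linear_factor hi h2 (natDegree_X_sub_C 1) (dvd_iff_isRoot.mpr h)

lemma irreducible_mirror {p : F[X]} (hi : Irreducible p) : Irreducible p.mirror := by
  have key : ∀ q : F[X], IsUnit q.mirror → IsUnit q := by
    intro q hu
    obtain ⟨r, hr, hC⟩ := Polynomial.isUnit_iff.mp hu
    have : q = C r := by rw [← mirror_mirror q, ← hC, mirror_C]
    exact this ▸ isUnit_C.mpr hr
  constructor
  · intro hu
    exact hi.not_isUnit (key p hu)
  · intro a b hab
    have hp : p = a.mirror * b.mirror := by
      rw [← mirror_mul_of_domain, ← hab, mirror_mirror]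
    rcases hi.isUnit_or_isUnit hp with h | h
    · exact Or.inl (key a h)
    · exact Or.inr (key b h)

lemma ne_zero_eq_one {x : F} (hx : x ≠ 0) : x = 1 := by revert hx; revert x; decide

/-- the forward map -/
def Phi (p : F[X]) : F[X] := p.mirror.comp (X + C 1)

/-- the backward map -/
def Psi (p : F[X]) : F[X] := (p.comp (X + C 1)).mirror

lemma XC_comp : ((X + C 1 : F[X]).comp (X + C 1)) = X := by
  rw [add_comp, X_comp, C_comp, add_assoc, ← map_add,
    show (1 : F) + 1 = 0 by decide, map_zero, add_zero]

lemma psi_phi (p : F[X]) : Psi (Phi p) = p := by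
  rw [Psi, Phi, comp_assoc, XC_comp, comp_X, mirror_mirror]

lemma phi_psi (p : F[X]) : Phi (Psi p) = p := by
  rw [Phi, Psi, mirror_mirror, comp_assoc, XC_comp, comp_X]

/-- the equivalence -/
def E : F[X] ≃ F[X] where
  toFun := Phi
  invFun := Psi
  left_inv := psi_phi
  right_inv := phi_psi

lemma irreducible_comp_XC {p : F[X]} (hi : Irreducible p) :
    Irreducible (p.comp (X + C 1)) := by
  have h := (MulEquiv.irreducible_iff
    (algEquivAevalXAddC (1 : F)).toMulEquiv (x := p)).mpr hi
  simpa [algEquivAevalXAddC_apply, ← comp_eq_aeval] using h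

lemma natDegree_comp_XC (p : F[X]) :
    (p.comp (X + C 1)).natDegree = p.natDegree := by
  rw [natDegree_comp, natDegree_X_add_C, mul_one]

instance inv4 : Invertible (t ^ 4) :=
  ⟨t + 1, by linear_combination (t^2 + t - 1) * hm0' - t^2 * h2R,
    by linear_combination (t^2 + t - 1) * hm0' - t^2 * h2R⟩

instance inv6 : Invertible (t ^ 6) :=
  ⟨t, by rw [← pow_succ']; exact h7t, by rw [← pow_succ]; exact h7t⟩

lemma fwd {N a : ℕ} (hN : 2 ≤ N) {p : F[X]} (h1 : p.Monic) (h2 : Irreducible p)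
    (h3 : p.natDegree = N) (h4 : aeval t p = t ^ a) :
    (Phi p).Monic ∧ Irreducible (Phi p) ∧ (Phi p).natDegree = N ∧
      aeval t (Phi p) = t ^ (3 * N + 4 * a) := by
  have hc0 : p.coeff 0 ≠ 0 := coeff_zero_ne h2 (h3 ▸ hN)
  have hntd : p.natTrailingDegree = 0 :=
    natTrailingDegree_eq_zero.mpr (Or.inr hc0)
  have hmono : p.mirror.Monic := by
    rw [Monic, mirror_leadingCoeff, trailingCoeff, hntd]
    exact ne_zero_eq_one hc0
  refine ⟨hmono.comp_X_add_C 1, irreducible_comp_XC (irreducible_mirror h2), ?_, ?_⟩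
  · rw [Phi, natDegree_comp_XC, mirror_natDegree, h3]
  · have hmir : p.mirror = p.reverse := by
      rw [Polynomial.mirror, hntd, pow_zero, mul_one]
    have hval : aeval t (Phi p) = aeval (t + 1) p.reverse := by
      rw [Phi, aeval_comp, hmir]
      congr 1
      rw [map_add, aeval_X, aeval_C, map_one]
    have hinv : (⅟(t ^ 4) : Rq) = t + 1 := rfl
    have hrev := eval₂_reverse_mul_pow (algebraMap F Rq) (t ^ 4) p
    rw [← aeval_def, ← aeval_def, hinv, h3] at hrev
    have h4a : aeval (t ^ 4) p = t ^ (4 * a) := by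
      rw [show (t ^ 4) = (t ^ 2) ^ 2 by ring, aeval_sq, aeval_sq, h4,
        ← pow_mul, ← pow_mul]
      ring_nf
    have hone : (t ^ 4) ^ N * (t ^ 3) ^ N = 1 := by
      rw [← mul_pow, show t ^ 4 * t ^ 3 = 1 by rw [← pow_add]; exact h7t, one_pow]
    calc aeval t (Phi p) = aeval (t + 1) p.reverse * ((t ^ 4) ^ N * (t ^ 3) ^ N) := by
          rw [hone, mul_one, hval]
      _ = (aeval (t + 1) p.reverse * (t ^ 4) ^ N) * (t ^ 3) ^ N := by ring
      _ = t ^ (4 * a) * t ^ (3 * N) := by rw [hrev, h4a, ← pow_mul]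
      _ = t ^ (3 * N + 4 * a) := by rw [← pow_add, Nat.add_comm]

lemma bwd {N b : ℕ} (hN : 2 ≤ N) {g : F[X]} (h1 : g.Monic) (h2 : Irreducible g)
    (h3 : g.natDegree = N) (h4 : aeval t g = t ^ b) :
    (Psi g).Monic ∧ Irreducible (Psi g) ∧ (Psi g).natDegree = N ∧
      aeval t (Psi g) = t ^ (N + 2 * b) := by
  set q : F[X] := g.comp (X + C 1) with hq
  have hqirr : Irreducible q := irreducible_comp_XC h2
  have hqdeg : q.natDegree = N := by rw [hq, natDegree_comp_XC, h3]
  have hqc0 : q.coeff 0 ≠ 0 := by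
    rw [coeff_zero_eq_eval_zero, hq, eval_comp]
    simpa using eval_one_ne h2 (h3 ▸ hN)
  have hntd : q.natTrailingDegree = 0 :=
    natTrailingDegree_eq_zero.mpr (Or.inr hqc0)
  have hmono : q.mirror.Monic := by
    rw [Monic, mirror_leadingCoeff, trailingCoeff, hntd]
    exact ne_zero_eq_one hqc0
  refine ⟨hmono, irreducible_mirror hqirr, by rw [Psi, mirror_natDegree, ← hq, hqdeg], ?_⟩
  have hmir : (Psi g) = q.reverse := by
    rw [Psi, ← hq, Polynomial.mirror, hntd, pow_zero, mul_one]
  have hinv : (⅟(t ^ 6) : Rq) = t := rfl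
  have hrev := eval₂_reverse_mul_pow (algebraMap F Rq) (t ^ 6) q
  rw [← aeval_def, ← aeval_def, hinv, hqdeg] at hrev
  have h6q : aeval (t ^ 6) q = t ^ (2 * b) := by
    rw [hq, aeval_comp, map_add, aeval_X, aeval_C, map_one,
      h62, aeval_sq, h4, ← pow_mul, Nat.mul_comm]
  have hone : (t ^ 6) ^ N * t ^ N = 1 := by
    rw [← mul_pow, show t ^ 6 * t = 1 by rw [← pow_succ]; exact h7t, one_pow]
  calc aeval t (Psi g) = aeval t q.reverse * ((t ^ 6) ^ N * t ^ N) := by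
        rw [hone, mul_one, hmir]
    _ = (aeval t q.reverse * (t ^ 6) ^ N) * t ^ N := by ring
    _ = t ^ (2 * b) * t ^ N := by rw [hrev, h6q]
    _ = t ^ (N + 2 * b) := by rw [← pow_add, Nat.add_comm]


lemma key' (N a b : ℕ) (hN : 2 ≤ N) (hab : (3 * N + 4 * a) % 7 = b % 7) :
    primeCount N mpoly (X ^ a) = primeCount N mpoly (X ^ b) := by
  unfold primeCount
  apply Nat.card_congr
  apply Equiv.subtypeEquiv E
  intro p
  show _ ↔ (Phi p).Monic ∧ Irreducible (Phi p) ∧ (Phi p).natDegree = N ∧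
    mpoly ∣ Phi p - X ^ b
  constructor
  · rintro ⟨m1, m2, m3, m4⟩
    obtain ⟨g1, g2, g3, g4⟩ := fwd hN m1 m2 m3 ((dvd_pow_iff p a).mp m4)
    exact ⟨g1, g2, g3, (dvd_pow_iff _ b).mpr
      (by rw [g4, tpow_mod, hab, ← tpow_mod])⟩
  · rintro ⟨m1, m2, m3, m4⟩
    obtain ⟨g1, g2, g3, g4⟩ := bwd hN m1 m2 m3 ((dvd_pow_iff _ b).mp m4)
    rw [psi_phi] at g1 g2 g3 g4
    have hmod2 : (N + 2 * b) % 7 = a % 7 := by omega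
    exact ⟨g1, g2, g3, (dvd_pow_iff p a).mpr
      (by rw [g4, tpow_mod, hmod2, ← tpow_mod])⟩

end

end TiesAux



/-- For `m = T³ + T + 1 ∈ F₂[T]`, `N ≥ 2` not divisible by `7` and `e ∈ {1, …, 6}` with
`N ≡ e (mod 7)`: `π(N; m, 1) = π(N; m, T^e) = π(N; m, T^{3e})` and
`π(N; m, T^{2e}) = π(N; m, T^{4e}) = π(N; m, T^{5e})`. -/
theorem ties_T3T1_N_not_mult_seven (N e : ℕ) (hN : 2 ≤ N) (h7 : ¬ 7 ∣ N)
    (he1 : 1 ≤ e) (he6 : e ≤ 6) (hmod : N ≡ e [MOD 7]) :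
    (primeCount N (X ^ 3 + X + 1 : Polynomial (ZMod 2)) 1
        = primeCount N (X ^ 3 + X + 1 : Polynomial (ZMod 2)) (X ^ e) ∧
      primeCount N (X ^ 3 + X + 1 : Polynomial (ZMod 2)) (X ^ e)
        = primeCount N (X ^ 3 + X + 1 : Polynomial (ZMod 2)) (X ^ (3 * e))) ∧
    (primeCount N (X ^ 3 + X + 1 : Polynomial (ZMod 2)) (X ^ (2 * e))
        = primeCount N (X ^ 3 + X + 1 : Polynomial (ZMod 2)) (X ^ (4 * e)) ∧
      primeCount N (X ^ 3 + X + 1 : Polynomial (ZMod 2)) (X ^ (4 * e))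
        = primeCount N (X ^ 3 + X + 1 : Polynomial (ZMod 2)) (X ^ (5 * e))) := by
  have hme : N % 7 = e % 7 := hmod
  have hmeq : (X ^ 3 + X + 1 : Polynomial (ZMod 2)) = TiesAux.mpoly := rfl
  rw [hmeq]
  have k1 : primeCount N TiesAux.mpoly (X ^ (0 : ℕ)) = primeCount N TiesAux.mpoly (X ^ (3 * e)) :=
    TiesAux.key' N 0 (3 * e) hN (by omega)
  have k2 : primeCount N TiesAux.mpoly (X ^ (3 * e)) = primeCount N TiesAux.mpoly (X ^ e) :=
    TiesAux.key' N (3 * e) e hN (by omega)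
  have k3 : primeCount N TiesAux.mpoly (X ^ (2 * e)) = primeCount N TiesAux.mpoly (X ^ (4 * e)) :=
    TiesAux.key' N (2 * e) (4 * e) hN (by omega)
  have k4 : primeCount N TiesAux.mpoly (X ^ (4 * e)) = primeCount N TiesAux.mpoly (X ^ (5 * e)) :=
    TiesAux.key' N (4 * e) (5 * e) hN (by omega)
  rw [pow_zero] at k1
  exact ⟨⟨k1.trans k2, k2.symm⟩, ⟨k3, k4⟩⟩
end

section
/- Let F₂ be the field with two elements and let m = T³ + T + 1 ∈ F₂[T]. For every positive integer N divisible by 7, π(N; m, T) = π(N; m, T²) = π(N; m, T⁴) and π(N; m, T³) = π(N; m, T⁵) = π(N; m, T⁶). -/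
open Polynomial

namespace TiesAux

noncomputable abbrev m0 : Polynomial (ZMod 2) := X ^ 3 + X + 1

noncomputable abbrev R0 : Type := AdjoinRoot m0

noncomputable abbrev t2 : R0 := AdjoinRoot.root m0

lemma two_eq_zero : (2 : R0) = 0 := by
  have h : ((2 : ℕ) : R0) = algebraMap (ZMod 2) R0 ((2 : ℕ) : ZMod 2) :=
    (map_natCast _ 2).symm
  have h2 : ((2 : ℕ) : ZMod 2) = 0 := by decide
  rw [h2, map_zero] at h
  simpa using h

lemma t_cube : t2 ^ 3 = t2 + 1 := by
  have h : (aeval t2) m0 = 0 := by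
    rw [AdjoinRoot.aeval_eq, AdjoinRoot.mk_self]
  simp only [m0, map_add, map_pow, aeval_X, map_one] at h
  have h2 := two_eq_zero
  linear_combination h - t2 * h2 - h2

lemma t_unit : t2 * (t2 ^ 2 + 1) = 1 := by
  have h3 := t_cube
  have h2 := two_eq_zero
  linear_combination h3 + t2 * h2

lemma t_pow7 : t2 ^ 7 = 1 := by
  have h3 := t_cube
  have h2 := two_eq_zero
  linear_combination (t2 ^ 4 + t2 ^ 2 + t2 + 1) * h3 + (t2 ^ 2 + t2) * h2

lemma aeval_sq_s15 (q : Polynomial (ZMod 2)) (x : R0) :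
    aeval (x ^ 2) q = (aeval x q) ^ 2 := by
  induction q using Polynomial.induction_on' with
  | add p q hp hq =>
      rw [map_add, map_add, hp, hq]
      have h2 := two_eq_zero
      linear_combination (-(aeval x p * aeval x q)) * h2
  | monomial n a =>
      have ha : a ^ 2 = a := by revert a; decide
      rw [aeval_monomial, aeval_monomial, mul_pow, ← map_pow, ha, ← pow_mul, ← pow_mul,
        Nat.mul_comm]

lemma reflect_invol_s15 (N : ℕ) {S : Type*} [Semiring S] (q : Polynomial S) :
    reflect N (reflect N q) = q := by
  ext i
  rw [coeff_reflect, coeff_reflect, revAt_invol]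

lemma comp_X_add_one_invol (f : Polynomial (ZMod 2)) :
    (f.comp (X + 1)).comp (X + 1) = f := by
  have hX : ((X + 1 : Polynomial (ZMod 2)).comp (X + 1)) = X := by
    have h11 : ((1 : ZMod 2) + 1) = 0 := by decide
    rw [add_comp, X_comp, one_comp, add_assoc, ← C_1, ← C_add, h11, C_0, add_zero]
  rw [comp_assoc, hX, comp_X]

lemma unit_of_reflect_unit (a : Polynomial (ZMod 2)) (h0 : a.coeff 0 ≠ 0)
    (h : IsUnit (reflect a.natDegree a)) : IsUnit a := by
  have hd : (reflect a.natDegree a).natDegree = 0 := natDegree_eq_zero_of_isUnit h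
  have hcoef : (reflect a.natDegree a).coeff a.natDegree ≠ 0 := by
    rwa [coeff_reflect, revAt_le le_rfl, Nat.sub_self]
  have hle : a.natDegree ≤ (reflect a.natDegree a).natDegree :=
    le_natDegree_of_ne_zero hcoef
  have hdeg : a.natDegree = 0 := by omega
  rw [eq_C_of_natDegree_eq_zero hdeg]
  exact isUnit_C.mpr h0.isUnit

/-- The main transfer: the image of `f` under `f(T) ↦ Tᴺ f((T+1)/T)` lies in the class `d`
whenever `f` lies in the class `c`, provided `(c(t))² = d(t)`. -/
lemma phi_mem (N : ℕ) (h7 : 7 ∣ N) (hN : 0 < N) (c d : Polynomial (ZMod 2))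
    (hcd : (aeval t2 c) ^ 2 = aeval t2 d)
    (f : Polynomial (ZMod 2))
    (hf : f.Monic ∧ Irreducible f ∧ f.natDegree = N ∧ m0 ∣ f - c) :
    (reflect N (f.comp (X + 1))).Monic ∧ Irreducible (reflect N (f.comp (X + 1))) ∧
      (reflect N (f.comp (X + 1))).natDegree = N ∧
      m0 ∣ reflect N (f.comp (X + 1)) - d := by
  obtain ⟨hmon, hirr, hdegf, hdvd⟩ := hf
  have hN7 : 7 ≤ N := Nat.le_of_dvd hN h7
  set p : Polynomial (ZMod 2) := f.comp (X + 1) with hp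
  set g : Polynomial (ZMod 2) := reflect N p with hg
  -- basic facts about p
  have hXC : (X + 1 : Polynomial (ZMod 2)) = X + C 1 := by rw [C_1]
  have hpm : p.Monic := by rw [hp, hXC]; exact hmon.comp_X_add_C 1
  have hpdeg : p.natDegree = N := by
    rw [hp, natDegree_comp, hXC, natDegree_X_add_C, Nat.mul_one, hdegf]
  have hpirr : Irreducible p := by
    have := (MulEquiv.irreducible_iff (M := Polynomial (ZMod 2))
      (algEquivAevalXAddC (1 : ZMod 2)) (x := f)).mpr hirr
    have happ : (algEquivAevalXAddC (1 : ZMod 2)) f = p := by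
      rw [hp, hXC]
      simp [algEquivAevalXAddC, algEquivOfCompEqX, ← comp_eq_aeval]
    rwa [happ] at this
  -- constant coefficient of p is 1
  have heval1 : f.eval 1 ≠ 0 := by
    intro h0
    have hdvd1 : (X - C 1 : Polynomial (ZMod 2)) ∣ f := dvd_iff_isRoot.mpr h0
    obtain ⟨e, he⟩ := hdvd1
    rcases hirr.isUnit_or_isUnit he with hu | hu
    · have := natDegree_eq_zero_of_isUnit hu
      rw [natDegree_X_sub_C] at this
      exact one_ne_zero this
    · have h1 : f.natDegree = 1 := by
        rw [he, natDegree_mul (X_sub_C_ne_zero 1)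
          (fun h => by simp [h] at hu), natDegree_X_sub_C,
          natDegree_eq_zero_of_isUnit hu]
      omega
  have hp0 : p.coeff 0 = 1 := by
    have : p.coeff 0 = f.eval 1 := by
      rw [coeff_zero_eq_eval_zero, hp, eval_comp]
      norm_num
    rw [this]
    revert heval1
    generalize f.eval 1 = a
    revert a; decide
  -- degree and monicity of g
  have hgN : g.coeff N = 1 := by
    rw [hg, coeff_reflect, revAt_le le_rfl, Nat.sub_self, hp0]
  have hgle : g.natDegree ≤ N := by
    rw [natDegree_le_iff_coeff_eq_zero]
    intro i hi
    rw [hg, coeff_reflect, revAt_eq_self_of_lt hi]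
    exact coeff_eq_zero_of_natDegree_lt (by omega)
  have hgdeg : g.natDegree = N := le_antisymm hgle
    (le_natDegree_of_ne_zero (by rw [hgN]; exact one_ne_zero))
  have hgmon : g.Monic := by
    rw [Monic, leadingCoeff, hgdeg, hgN]
  have hg0 : g ≠ 0 := hgmon.ne_zero
  have hgc0 : g.coeff 0 ≠ 0 := by
    rw [hg, coeff_reflect, revAt_zero, ← hpdeg]
    rw [← leadingCoeff]
    rw [hpm.leadingCoeff]
    exact one_ne_zero
  -- irreducibility of g
  have hgirr : Irreducible g := by
    constructor
    · intro hu
      have := natDegree_eq_zero_of_isUnit hu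
      omega
    · intro a b hab
      have ha0 : a ≠ 0 := by rintro rfl; rw [zero_mul] at hab; exact hg0 hab
      have hb0 : b ≠ 0 := by rintro rfl; rw [mul_zero] at hab; exact hg0 hab
      have hsum : a.natDegree + b.natDegree = N := by
        rw [← hgdeg, hab, natDegree_mul ha0 hb0]
      have hq : p = reflect a.natDegree a * reflect b.natDegree b := by
        have h1 : reflect N g = p := by rw [hg, reflect_invol_s15]
        rw [← h1, hab, ← hsum]
        exact reflect_mul a b le_rfl le_rfl
      have hac0 : a.coeff 0 ≠ 0 := by
        intro h0
        apply hgc0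
        have : X ∣ g := hab ▸ (X_dvd_iff.mpr h0).mul_right b
        exact X_dvd_iff.mp this
      have hbc0 : b.coeff 0 ≠ 0 := by
        intro h0
        apply hgc0
        have : X ∣ g := hab ▸ (X_dvd_iff.mpr h0).mul_left a
        exact X_dvd_iff.mp this
      rcases hpirr.isUnit_or_isUnit hq with h | h
      · exact Or.inl (unit_of_reflect_unit a hac0 h)
      · exact Or.inr (unit_of_reflect_unit b hbc0 h)
  refine ⟨hgmon, hgirr, hgdeg, ?_⟩
  -- the congruence condition
  letI : Invertible (t2 ^ 2 + 1 : R0) :=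
    ⟨t2, t_unit, by rw [mul_comm]; exact t_unit⟩
  have hrefl := eval₂_reflect_mul_pow (algebraMap (ZMod 2) R0) (t2 ^ 2 + 1) N p hpdeg.le
  have hinv : (⅟ (t2 ^ 2 + 1) : R0) = t2 := rfl
  rw [hinv] at hrefl
  have hpow7 : ((t2 ^ 2 + 1 : R0)) ^ 7 = 1 := by
    have h := congrArg (· ^ 7) t_unit
    simp only [mul_pow, one_pow] at h
    rw [t_pow7, one_mul] at h
    exact h
  have hpow : ((t2 ^ 2 + 1 : R0)) ^ N = 1 := by
    obtain ⟨k, rfl⟩ := h7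
    rw [pow_mul, hpow7, one_pow]
  rw [hpow, mul_one] at hrefl
  -- hrefl : eval₂ _ t2 (reflect N p) = eval₂ _ (t2^2+1) p
  have haev : aeval t2 g = aeval (t2 ^ 2 + 1) p := by
    rw [hg, aeval_def, aeval_def]; exact hrefl
  have hsq : (t2 ^ 2 + 1 : R0) + 1 = t2 ^ 2 := by
    have h2 := two_eq_zero
    linear_combination h2
  have haev2 : aeval (t2 ^ 2 + 1) p = (aeval t2 f) ^ 2 := by
    rw [hp, aeval_comp]
    have : (aeval (t2 ^ 2 + 1 : R0)) (X + 1 : Polynomial (ZMod 2)) = t2 ^ 2 := by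
      rw [map_add, aeval_X, map_one, hsq]
    rw [this, aeval_sq_s15]
  have hfc : aeval t2 f = aeval t2 c := by
    have := AdjoinRoot.mk_eq_mk.mpr hdvd
    rw [← AdjoinRoot.aeval_eq, ← AdjoinRoot.aeval_eq] at this
    exact this
  have : aeval t2 g = aeval t2 d := by
    rw [haev, haev2, hfc, hcd]
  rw [AdjoinRoot.aeval_eq, AdjoinRoot.aeval_eq] at this
  exact AdjoinRoot.mk_eq_mk.mp this

instance fin_S (N : ℕ) (m c : Polynomial (ZMod 2)) :
    Finite {f : Polynomial (ZMod 2) // f.Monic ∧ Irreducible f ∧ f.natDegree = N ∧ m ∣ f - c} := by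
  apply Finite.of_injective
    (fun f : {f : Polynomial (ZMod 2) //
        f.Monic ∧ Irreducible f ∧ f.natDegree = N ∧ m ∣ f - c} =>
      (fun i : Fin (N + 1) => (f : Polynomial (ZMod 2)).coeff i))
  rintro ⟨f, hf⟩ ⟨g, hg⟩ h
  apply Subtype.ext
  ext n
  rcases lt_or_ge n (N + 1) with hn | hn
  · exact congrFun h ⟨n, hn⟩
  · rw [coeff_eq_zero_of_natDegree_lt (by omega : f.natDegree < n),
      coeff_eq_zero_of_natDegree_lt (by omega : g.natDegree < n)]

lemma count_le (N : ℕ) (h7 : 7 ∣ N) (hN : 0 < N) (c d : Polynomial (ZMod 2))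
    (hcd : (aeval t2 c) ^ 2 = aeval t2 d) :
    primeCount N m0 c ≤ primeCount N m0 d := by
  apply Nat.card_le_card_of_injective
    (fun f : {f : Polynomial (ZMod 2) //
        f.Monic ∧ Irreducible f ∧ f.natDegree = N ∧ m0 ∣ f - c} =>
      (⟨reflect N ((f : Polynomial (ZMod 2)).comp (X + 1)),
        phi_mem N h7 hN c d hcd f f.2⟩ :
        {f : Polynomial (ZMod 2) //
          f.Monic ∧ Irreducible f ∧ f.natDegree = N ∧ m0 ∣ f - d}))
  rintro ⟨f, hf⟩ ⟨g, hg⟩ h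
  simp only [Subtype.mk.injEq] at h
  apply Subtype.ext
  have h1 : f.comp (X + 1) = g.comp (X + 1) := by
    have := congrArg (reflect N) h
    rwa [reflect_invol_s15, reflect_invol_s15] at this
  have := congrArg (·.comp (X + 1)) h1
  simpa only [comp_X_add_one_invol] using this

end TiesAux

/-- For `m = T³ + T + 1 ∈ F₂[T]` and every positive `N` divisible by `7`:
`π(N; m, T) = π(N; m, T²) = π(N; m, T⁴)` and `π(N; m, T³) = π(N; m, T⁵) = π(N; m, T⁶)`. -/
theorem ties_T3T1_N_mult_seven (N : ℕ) (hN : 0 < N) (h7 : 7 ∣ N) :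
    (primeCount N (X ^ 3 + X + 1 : Polynomial (ZMod 2)) X
        = primeCount N (X ^ 3 + X + 1 : Polynomial (ZMod 2)) (X ^ 2) ∧
      primeCount N (X ^ 3 + X + 1 : Polynomial (ZMod 2)) (X ^ 2)
        = primeCount N (X ^ 3 + X + 1 : Polynomial (ZMod 2)) (X ^ 4)) ∧
    (primeCount N (X ^ 3 + X + 1 : Polynomial (ZMod 2)) (X ^ 3)
        = primeCount N (X ^ 3 + X + 1 : Polynomial (ZMod 2)) (X ^ 5) ∧
      primeCount N (X ^ 3 + X + 1 : Polynomial (ZMod 2)) (X ^ 5)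
        = primeCount N (X ^ 3 + X + 1 : Polynomial (ZMod 2)) (X ^ 6)) := by
  open TiesAux in
  have h7p := TiesAux.t_pow7
  have e12 : primeCount N TiesAux.m0 X ≤ primeCount N TiesAux.m0 (X ^ 2) := by
    apply TiesAux.count_le N h7 hN
    simp only [map_pow, aeval_X]
  have e24 : primeCount N TiesAux.m0 (X ^ 2) ≤ primeCount N TiesAux.m0 (X ^ 4) := by
    apply TiesAux.count_le N h7 hN
    simp only [map_pow, aeval_X]; ring
  have e41 : primeCount N TiesAux.m0 (X ^ 4) ≤ primeCount N TiesAux.m0 X := by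
    apply TiesAux.count_le N h7 hN
    simp only [map_pow, aeval_X]
    linear_combination TiesAux.t2 * h7p
  have e36 : primeCount N TiesAux.m0 (X ^ 3) ≤ primeCount N TiesAux.m0 (X ^ 6) := by
    apply TiesAux.count_le N h7 hN
    simp only [map_pow, aeval_X]; ring
  have e65 : primeCount N TiesAux.m0 (X ^ 6) ≤ primeCount N TiesAux.m0 (X ^ 5) := by
    apply TiesAux.count_le N h7 hN
    simp only [map_pow, aeval_X]
    linear_combination TiesAux.t2 ^ 5 * h7p
  have e53 : primeCount N TiesAux.m0 (X ^ 5) ≤ primeCount N TiesAux.m0 (X ^ 3) := by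
    apply TiesAux.count_le N h7 hN
    simp only [map_pow, aeval_X]
    linear_combination TiesAux.t2 ^ 3 * h7p
  simp only [TiesAux.m0] at e12 e24 e41 e36 e65 e53
  refine ⟨⟨?_, ?_⟩, ⟨?_, ?_⟩⟩ <;> omega
end

section
/- Let F₃ be the field with three elements and let m = T² + 1 ∈ F₃[T]. For every odd positive integer N, π(N; m, 1) = π(N; m, 2), π(N; m, T + 1) = π(N; m, T + 2), and π(N; m, 2T + 1) = π(N; m, 2T + 2). -/
open Polynomial

section aux
variable {F : Type*} [Field F]

noncomputable def negXEquiv (F : Type*) [Field F] : Polynomial F ≃+* Polynomial F :=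
  RingEquiv.ofRingHom (eval₂RingHom C (-X) : Polynomial F →+* Polynomial F)
    (eval₂RingHom C (-X)) (by ext <;> simp) (by ext <;> simp)

lemma negXEquiv_apply (p : Polynomial F) : negXEquiv F p = p.comp (-X) := rfl

lemma tau_invol (f : Polynomial F) : -(((-(f.comp (-X)))).comp (-X)) = f := by
  rw [neg_comp, neg_neg, comp_neg_X_comp_neg_X]

lemma prop_transfer {N : ℕ} (hodd : Odd N) {m c : Polynomial F} (hm : m.comp (-X) = m)
    {f : Polynomial F} (h : f.Monic ∧ Irreducible f ∧ f.natDegree = N ∧ m ∣ f - c) :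
    (-(f.comp (-X))).Monic ∧ Irreducible (-(f.comp (-X))) ∧
      (-(f.comp (-X))).natDegree = N ∧ m ∣ (-(f.comp (-X))) - (-(c.comp (-X))) := by
  obtain ⟨hmon, hirr, hdeg, hdvd⟩ := h
  have hdeg' : (-(f.comp (-X))).natDegree = N := by
    rw [natDegree_neg, natDegree_comp, natDegree_neg, natDegree_X, mul_one, hdeg]
  refine ⟨?_, ?_, hdeg', ?_⟩
  · have := hmon.neg_one_pow_natDegree_mul_comp_neg_X
    rwa [hdeg, hodd.neg_one_pow, neg_one_mul] at this
  · rw [← neg_one_mul]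
    rw [irreducible_isUnit_mul (IsUnit.neg isUnit_one)]
    exact (MulEquiv.irreducible_iff (negXEquiv F).toMulEquiv).mpr hirr
  · obtain ⟨g, hg⟩ := hdvd
    refine ⟨-(g.comp (-X)), ?_⟩
    have h : -(f.comp (-X)) - -(c.comp (-X)) = -((f - c).comp (-X)) := by
      rw [sub_comp]; ring
    rw [h, hg, mul_comp, hm, mul_neg]

lemma primeCount_neg_comp {N : ℕ} (hodd : Odd N) (m c : Polynomial F)
    (hm : m.comp (-X) = m) : primeCount N m c = primeCount N m (-(c.comp (-X))) := by
  apply Nat.card_congr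
  refine ⟨fun f => ⟨-(f.1.comp (-X)), prop_transfer hodd hm f.2⟩,
    fun f => ⟨-(f.1.comp (-X)), ?_⟩, fun f => Subtype.ext (tau_invol f.1),
    fun f => Subtype.ext (tau_invol f.1)⟩
  have := prop_transfer hodd hm f.2
  rwa [tau_invol] at this

end aux

/-- For `m = T² + 1 ∈ F₃[T]` and every odd positive `N`: `π(N; m, 1) = π(N; m, 2)`,
`π(N; m, T + 1) = π(N; m, T + 2)`, and `π(N; m, 2T + 1) = π(N; m, 2T + 2)`. -/
theorem ties_p3_T2plus1_N_odd (N : ℕ) (hN : 0 < N) (hodd : Odd N) :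
    primeCount N (X ^ 2 + 1 : Polynomial (ZMod 3)) 1
        = primeCount N (X ^ 2 + 1 : Polynomial (ZMod 3)) 2 ∧
      primeCount N (X ^ 2 + 1 : Polynomial (ZMod 3)) (X + 1)
        = primeCount N (X ^ 2 + 1 : Polynomial (ZMod 3)) (X + 2) ∧
      primeCount N (X ^ 2 + 1 : Polynomial (ZMod 3)) (C 2 * X + 1)
        = primeCount N (X ^ 2 + 1 : Polynomial (ZMod 3)) (C 2 * X + 2) := by
  have hm : ((X ^ 2 + 1 : Polynomial (ZMod 3))).comp (-X) = X ^ 2 + 1 := by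
    simp [add_comp, pow_comp]
  have h2 : (2 : Polynomial (ZMod 3)) = -1 := by
    have : (2 : ZMod 3) = -1 := by decide
    rw [show (2 : Polynomial (ZMod 3)) = C 2 from (map_ofNat C 2).symm, this]
    simp
  refine ⟨?_, ?_, ?_⟩
  · rw [primeCount_neg_comp hodd _ 1 hm]
    congr 1
    simp [h2]
  · rw [primeCount_neg_comp hodd _ (X + 1) hm]
    congr 1
    rw [add_comp, X_comp, one_comp, h2]
    ring
  · rw [primeCount_neg_comp hodd _ (C 2 * X + 1) hm]
    congr 1
    rw [add_comp, mul_comp, X_comp, C_comp, one_comp, h2]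
    ring
end

section
/- Let F₂ be the field with two elements and let m = T² ∈ F₂[T]. For every odd integer N ≥ 3, π(N; m, 1) = π(N; m, T + 1). -/
open Polynomial

namespace TieAux

noncomputable def Phi (d : ℕ) (f : Polynomial (ZMod 2)) : Polynomial (ZMod 2) :=
  ((f.comp (X + 1)).reflect d).comp (X + 1)

lemma XaddOne_comp : ((X + 1 : Polynomial (ZMod 2)).comp (X + 1)) = X := by
  have h2 : (1 + 1 : Polynomial (ZMod 2)) = 0 := by
    have h : ((1 : ZMod 2) + 1) = 0 := by decide
    rw [← C_1, ← C_add, h, C_0]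
  rw [add_comp, X_comp, one_comp, add_assoc, h2, add_zero]

lemma comp_comp (f : Polynomial (ZMod 2)) : (f.comp (X + 1)).comp (X + 1) = f := by
  rw [comp_assoc, XaddOne_comp, comp_X]

lemma reflect_reflect (d : ℕ) (p : Polynomial (ZMod 2)) : (p.reflect d).reflect d = p := by
  ext i
  simp [coeff_reflect]

lemma Phi_Phi (d : ℕ) (f : Polynomial (ZMod 2)) : Phi d (Phi d f) = f := by
  unfold Phi
  rw [comp_comp, reflect_reflect, comp_comp]

lemma natDegree_XaddOne : (X + 1 : Polynomial (ZMod 2)).natDegree = 1 := by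
  simpa using natDegree_X_add_C (1 : ZMod 2)

lemma Phi_sub (d : ℕ) (f g : Polynomial (ZMod 2)) :
    Phi d (f - g) = Phi d f - Phi d g := by
  unfold Phi
  rw [sub_comp]
  have : (f.comp (X + 1) - g.comp (X + 1)).reflect d
      = (f.comp (X + 1)).reflect d - (g.comp (X + 1)).reflect d := by
    ext i
    simp [coeff_reflect, coeff_sub]
  rw [this, sub_comp]

lemma Phi_mul {da db : ℕ} {a b : Polynomial (ZMod 2)} (ha : a.natDegree ≤ da)
    (hb : b.natDegree ≤ db) : Phi (da + db) (a * b) = Phi da a * Phi db b := by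
  unfold Phi
  have ha' : (a.comp (X + 1)).natDegree ≤ da := by
    rw [natDegree_comp]
    simp [natDegree_XaddOne] at *; omega
  have hb' : (b.comp (X + 1)).natDegree ≤ db := by
    rw [natDegree_comp]
    simp [natDegree_XaddOne] at *; omega
  rw [mul_comp, reflect_mul _ _ ha' hb', mul_comp]

lemma natDegree_reflect_le {d : ℕ} {p : Polynomial (ZMod 2)} (hp : p.natDegree ≤ d) :
    (p.reflect d).natDegree ≤ d := by
  apply natDegree_le_iff_coeff_eq_zero.mpr
  intro i hi
  rw [coeff_reflect, revAt_eq_self_of_lt hi]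
  exact coeff_eq_zero_of_natDegree_lt (lt_of_le_of_lt hp hi)

lemma natDegree_Phi_le (d : ℕ) (f : Polynomial (ZMod 2)) (hf : f.natDegree ≤ d) :
    (Phi d f).natDegree ≤ d := by
  unfold Phi
  rw [natDegree_comp]
  have : (f.comp (X + 1)).natDegree ≤ d := by rw [natDegree_comp]; simp [natDegree_XaddOne]; exact hf
  simpa [natDegree_XaddOne] using natDegree_reflect_le this

lemma eval_one_eq_one {f : Polynomial (ZMod 2)} (hi : Irreducible f)
    (h2 : 2 ≤ f.natDegree) : f.eval 1 = 1 := by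
  have hne : f.eval 1 ≠ 0 := by
    intro h
    have hdvd : (X - C 1) ∣ f := (dvd_iff_isRoot).mpr h
    obtain ⟨g, hg⟩ := hdvd
    rcases hi.isUnit_or_isUnit hg with h' | h'
    · exact (Polynomial.not_isUnit_of_natDegree_pos _ (by rw [natDegree_X_sub_C]; omega) h')
    · have hg0 : g.natDegree = 0 := natDegree_eq_zero_of_isUnit h'
      have hX : (X - C 1 : Polynomial (ZMod 2)) ≠ 0 := X_sub_C_ne_zero 1
      have hgne : g ≠ 0 := by
        rintro rfl
        simp at hg
        exact hi.ne_zero hg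
      have : f.natDegree = 1 := by
        rw [hg, natDegree_mul hX hgne, natDegree_X_sub_C, hg0]
      omega
  have : ∀ a : ZMod 2, a ≠ 0 → a = 1 := by decide
  exact this _ hne

lemma monic_natDegree_Phi {N : ℕ} {f : Polynomial (ZMod 2)} (hm : f.Monic)
    (hd : f.natDegree = N) (h1 : f.eval 1 = 1) :
    (Phi N f).Monic ∧ (Phi N f).natDegree = N := by
  set p := f.comp (X + 1) with hp
  have hpd : p.natDegree = N := by rw [hp, natDegree_comp, natDegree_XaddOne, mul_one, hd]
  have hcoeffN : (p.reflect N).coeff N = 1 := by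
    rw [coeff_reflect, revAt_le (le_refl N), Nat.sub_self, coeff_zero_eq_eval_zero, hp,
      eval_comp]
    simpa using h1
  have hrd : (p.reflect N).natDegree = N :=
    le_antisymm (natDegree_reflect_le (le_of_eq hpd))
      (le_natDegree_of_ne_zero (by rw [hcoeffN]; exact one_ne_zero))
  have hrm : (p.reflect N).Monic := by
    unfold Monic leadingCoeff
    rw [hrd, hcoeffN]
  have hXm : (X + 1 : Polynomial (ZMod 2)).Monic := by
    simpa using monic_X_add_C (1 : ZMod 2)
  constructor
  · exact hrm.comp hXm (by rw [natDegree_XaddOne]; exact one_ne_zero)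
  · unfold Phi
    rw [natDegree_comp, natDegree_XaddOne, mul_one, ← hp, hrd]

lemma isUnit_of_natDegree_zero {a : Polynomial (ZMod 2)} (ha : a ≠ 0)
    (h : a.natDegree = 0) : IsUnit a := by
  rw [Polynomial.isUnit_iff_degree_eq_zero, degree_eq_natDegree ha, h]
  rfl

lemma irreducible_Phi {N : ℕ} {f : Polynomial (ZMod 2)} (hN : 1 ≤ N) (hd : f.natDegree = N)
    (hi : Irreducible f) (hdPhi : (Phi N f).natDegree = N) : Irreducible (Phi N f) := by
  constructor
  · exact Polynomial.not_isUnit_of_natDegree_pos _ (by omega)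
  · intro a b hab
    have hPhine : Phi N f ≠ 0 := fun h => by
      rw [h] at hdPhi; simp at hdPhi; omega
    have ha0 : a ≠ 0 := fun h => hPhine (by rw [hab, h, zero_mul])
    have hb0 : b ≠ 0 := fun h => hPhine (by rw [hab, h, mul_zero])
    have hdab : a.natDegree + b.natDegree = N := by
      rw [← natDegree_mul ha0 hb0, ← hab, hdPhi]
    have hf : f = Phi a.natDegree a * Phi b.natDegree b := by
      calc f = Phi N (Phi N f) := (Phi_Phi N f).symm
        _ = Phi (a.natDegree + b.natDegree) (a * b) := by rw [hab, hdab]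
        _ = Phi a.natDegree a * Phi b.natDegree b := Phi_mul le_rfl le_rfl
    have hfne : f ≠ 0 := hi.ne_zero
    have hAne : Phi a.natDegree a ≠ 0 := fun h => hfne (by rw [hf, h, zero_mul])
    have hBne : Phi b.natDegree b ≠ 0 := fun h => hfne (by rw [hf, h, mul_zero])
    have hA : (Phi a.natDegree a).natDegree ≤ a.natDegree := natDegree_Phi_le _ _ le_rfl
    have hB : (Phi b.natDegree b).natDegree ≤ b.natDegree := natDegree_Phi_le _ _ le_rfl
    have hsum : (Phi a.natDegree a).natDegree + (Phi b.natDegree b).natDegree = N := by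
      rw [← natDegree_mul hAne hBne, ← hf, hd]
    rcases hi.isUnit_or_isUnit hf with h | h
    · left
      have h0 : (Phi a.natDegree a).natDegree = 0 := natDegree_eq_zero_of_isUnit h
      exact isUnit_of_natDegree_zero ha0 (by omega)
    · right
      have h0 : (Phi b.natDegree b).natDegree = 0 := natDegree_eq_zero_of_isUnit h
      exact isUnit_of_natDegree_zero hb0 (by omega)

lemma onePlusOne : (1 + 1 : Polynomial (ZMod 2)) = 0 := by
  have h : ((1 : ZMod 2) + 1) = 0 := by decide
  rw [← C_1, ← C_add, h, C_0]

lemma XaddOne_sq : ((X + 1 : Polynomial (ZMod 2)))^2 = X^2 + 1 := by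
  haveI : Fact (Nat.Prime 2) := ⟨Nat.prime_two⟩
  rw [add_pow_char, one_pow]

lemma Phi_two_X_sq : Phi 2 (X^2 : Polynomial (ZMod 2)) = X^2 := by
  unfold Phi
  rw [pow_comp, X_comp, XaddOne_sq, reflect_add, reflect_monomial, reflect_one]
  have e1 : revAt 2 2 = 0 := by rw [revAt_le (le_refl 2)]
  rw [e1, add_comp, pow_comp, pow_comp, X_comp, pow_zero, XaddOne_sq,
    add_comm (X^2 : Polynomial (ZMod 2)) 1, ← add_assoc, onePlusOne, zero_add]

lemma dvd_Phi_sub {N : ℕ} (hN : 3 ≤ N) {f c : Polynomial (ZMod 2)} (hd : f.natDegree ≤ N)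
    (hc : c.natDegree ≤ 1) (hdvd : (X:Polynomial (ZMod 2))^2 ∣ f - c) :
    (X:Polynomial (ZMod 2))^2 ∣ Phi N f - Phi N c := by
  obtain ⟨h, hh⟩ := hdvd
  rw [← Phi_sub, hh]
  by_cases h0 : h = 0
  · rw [h0, mul_zero]
    unfold Phi
    simp [reflect_zero]
  have hX2 : (X:Polynomial (ZMod 2))^2 ≠ 0 := pow_ne_zero _ X_ne_zero
  have hhd : h.natDegree ≤ N - 2 := by
    have h1 : ((X:Polynomial (ZMod 2))^2 * h).natDegree = 2 + h.natDegree := by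
      rw [natDegree_mul hX2 h0, natDegree_X_pow]
    have h2 : (f - c).natDegree ≤ N :=
      le_trans (natDegree_sub_le f c) (sup_le hd (le_trans hc (by omega)))
    rw [← hh] at h1
    omega
  have hsplit : Phi N ((X:Polynomial (ZMod 2))^2 * h) = Phi 2 (X^2) * Phi (N-2) h := by
    have e := Phi_mul (da := 2) (db := N - 2) (a := (X:Polynomial (ZMod 2))^2) (b := h)
      (by rw [natDegree_X_pow]) hhd
    rwa [show 2 + (N - 2) = N by omega] at e
  rw [hsplit, Phi_two_X_sq]
  exact Dvd.intro _ rfl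

lemma Phi_one (N : ℕ) : Phi N (1 : Polynomial (ZMod 2)) = (X + 1) ^ N := by
  unfold Phi
  rw [one_comp, reflect_one, pow_comp, X_comp]

lemma Phi_XaddOne (N : ℕ) (hN : 1 ≤ N) : Phi N (X + 1 : Polynomial (ZMod 2)) = (X + 1) ^ (N - 1) := by
  unfold Phi
  rw [XaddOne_comp, ← pow_one (X : Polynomial (ZMod 2)), reflect_monomial, revAt_le hN,
    pow_comp, X_comp]

lemma cast_odd {N : ℕ} (hodd : Odd N) : (N : ZMod 2) = 1 := by
  obtain ⟨k, rfl⟩ := hodd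
  push_cast
  rw [show ((2 : ZMod 2)) = 0 from by decide]
  ring

lemma cast_even {N : ℕ} (heven : Even N) : (N : ZMod 2) = 0 := by
  obtain ⟨k, rfl⟩ := heven
  push_cast
  rw [← two_mul, show ((2 : ZMod 2)) = 0 from by decide]
  ring

lemma dvd_one_side {N : ℕ} (hodd : Odd N) :
    (X : Polynomial (ZMod 2)) ^ 2 ∣ (X + 1) ^ N - (X + 1) := by
  rw [X_pow_dvd_iff]
  intro d hd
  interval_cases d
  · simp [coeff_X_add_one_pow]
  · simp [coeff_X_add_one_pow, cast_odd hodd, coeff_one]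

lemma dvd_other_side {N : ℕ} (hN : 1 ≤ N) (hodd : Odd N) :
    (X : Polynomial (ZMod 2)) ^ 2 ∣ (X + 1) ^ (N - 1) - 1 := by
  rw [X_pow_dvd_iff]
  intro d hd
  have heven : Even (N - 1) := by
    obtain ⟨k, rfl⟩ := hodd
    simpa using even_two_mul k
  interval_cases d
  · simp [coeff_X_add_one_pow]
  · simp [coeff_X_add_one_pow, cast_even heven, coeff_one]

lemma main_step {N : ℕ} (hN : 3 ≤ N) {c c' : Polynomial (ZMod 2)}
    (hc : c.natDegree ≤ 1) (hcc' : (X : Polynomial (ZMod 2)) ^ 2 ∣ Phi N c - c')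
    {f : Polynomial (ZMod 2)}
    (h : f.Monic ∧ Irreducible f ∧ f.natDegree = N ∧ (X : Polynomial (ZMod 2)) ^ 2 ∣ f - c) :
    (Phi N f).Monic ∧ Irreducible (Phi N f) ∧ (Phi N f).natDegree = N ∧
      (X : Polynomial (ZMod 2)) ^ 2 ∣ Phi N f - c' := by
  obtain ⟨hm, hi, hd, hdvd⟩ := h
  have h1 : f.eval 1 = 1 := eval_one_eq_one hi (by omega)
  obtain ⟨hmono, hdeg⟩ := monic_natDegree_Phi hm hd h1
  refine ⟨hmono, irreducible_Phi (by omega) hd hi hdeg, hdeg, ?_⟩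
  have h2 := dvd_Phi_sub hN (le_of_eq hd) hc hdvd
  have h3 : Phi N f - c' = (Phi N f - Phi N c) + (Phi N c - c') := by ring
  rw [h3]
  exact dvd_add h2 hcc'

end TieAux

open TieAux in
theorem tie_p2_T2_N_odd' (N : ℕ) (hN : 3 ≤ N) (hodd : Odd N) :
    Nat.card {f : Polynomial (ZMod 2) // f.Monic ∧ Irreducible f ∧ f.natDegree = N ∧ (X^2:Polynomial (ZMod 2)) ∣ f - 1}
      = Nat.card {f : Polynomial (ZMod 2) // f.Monic ∧ Irreducible f ∧ f.natDegree = N ∧ (X^2:Polynomial (ZMod 2)) ∣ f - (X+1)} := by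
  have hc1 : (1 : Polynomial (ZMod 2)).natDegree ≤ 1 := by simp
  have hcX : (X + 1 : Polynomial (ZMod 2)).natDegree ≤ 1 := le_of_eq natDegree_XaddOne
  have hdvd1 : (X : Polynomial (ZMod 2)) ^ 2 ∣ Phi N 1 - (X + 1) := by
    rw [Phi_one]; exact dvd_one_side hodd
  have hdvd2 : (X : Polynomial (ZMod 2)) ^ 2 ∣ Phi N (X + 1) - 1 := by
    rw [Phi_XaddOne N (by omega)]; exact dvd_other_side (by omega) hodd
  exact Nat.card_congr
    ⟨fun x => ⟨Phi N x.1, main_step hN hc1 hdvd1 x.2⟩,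
     fun x => ⟨Phi N x.1, main_step hN hcX hdvd2 x.2⟩,
     fun x => Subtype.ext (Phi_Phi N x.1), fun x => Subtype.ext (Phi_Phi N x.1)⟩


/-- For `m = T² ∈ F₂[T]` and every odd `N ≥ 3`: `π(N; m, 1) = π(N; m, T + 1)`. -/
theorem tie_p2_T2_N_odd (N : ℕ) (hN : 3 ≤ N) (hodd : Odd N) :
    primeCount N (X ^ 2 : Polynomial (ZMod 2)) 1
      = primeCount N (X ^ 2 : Polynomial (ZMod 2)) (X + 1) := by
  exact tie_p2_T2_N_odd' N hN hodd
end

section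
/- Let F be a finite field, let b ∈ F, and let m ∈ F[T] be a monic polynomial of degree ≥ 1 satisfying m(T + b) = m(T). Then for every polynomial c ∈ F[T] coprime to m and every integer N ≥ 1, π(N; m, c(T)) = π(N; m, c(T + b)), where c(T + b) denotes the composition of c with T + b. (In particular this applies to the Artin–Schreier polynomials m(T) = T^p − T − a over F_p with a ∈ F_p^×, which satisfy m(T + b) = m(T) for all b ∈ F_p.) -/
open Polynomial

/-- If `m ∈ F[T]` is monic of degree `≥ 1` and invariant under the translation `T ↦ T + b`,
then for every `c` coprime to `m` and every `N ≥ 1`,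
`π(N; m, c(T)) = π(N; m, c(T + b))`. -/
theorem tie_translation_invariant {F : Type*} [Field F] [Fintype F] (b : F)
    (m : Polynomial F) (hmonic : m.Monic) (hdeg : 1 ≤ m.natDegree)
    (hfix : m.comp (X + C b) = m) (c : Polynomial F) (hc : IsCoprime c m)
    (N : ℕ) (hN : 1 ≤ N) :
    primeCount N m c = primeCount N m (c.comp (X + C b)) := by
  unfold primeCount
  refine Nat.card_congr (Equiv.subtypeEquiv (algEquivAevalXAddC b).toEquiv fun f => ?_)
  have key : ∀ g : Polynomial F, (algEquivAevalXAddC b).toEquiv g = g.comp (X + C b) :=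
    fun g => (comp_eq_aeval).symm
  have hXb : (X + C b : Polynomial F).Monic := monic_X_add_C b
  have hXnb : (X + C (-b) : Polynomial F).Monic := monic_X_add_C (-b)
  have hdeg1 : (X + C b : Polynomial F).natDegree = 1 := natDegree_X_add_C b
  have hdeg1' : (X + C (-b) : Polynomial F).natDegree = 1 := natDegree_X_add_C (-b)
  have hundo : ∀ g : Polynomial F, (g.comp (X + C b)).comp (X + C (-b)) = g := by
    intro g
    rw [comp_assoc]
    simp
  have hmfix' : m.comp (X + C (-b)) = m := by
    conv_lhs => rw [← hfix]
    rw [comp_assoc]; simp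
  constructor
  · rintro ⟨h1, h2, h3, h4⟩
    refine ⟨?_, ?_, ?_, ?_⟩
    · rw [key]; exact h1.comp hXb (by rw [hdeg1]; exact one_ne_zero)
    · exact (MulEquiv.irreducible_iff (algEquivAevalXAddC b).toMulEquiv).mpr h2
    · rw [key, natDegree_comp, hdeg1, mul_one, h3]
    · obtain ⟨k, hk⟩ := h4
      refine ⟨k.comp (X + C b), ?_⟩
      rw [key, ← sub_comp, hk, mul_comp, hfix]
  · rintro ⟨h1, h2, h3, h4⟩
    rw [key] at h1 h3 h4
    refine ⟨?_, ?_, ?_, ?_⟩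
    · have h' : f = (f.comp (X + C b)).comp (X + C (-b)) := (hundo f).symm
      rw [h']
      exact h1.comp hXnb (by rw [hdeg1']; exact one_ne_zero)
    · exact (MulEquiv.irreducible_iff (algEquivAevalXAddC b).toMulEquiv).mp h2
    · rw [natDegree_comp, hdeg1, mul_one] at h3; exact h3
    · obtain ⟨k, hk⟩ := h4
      refine ⟨k.comp (X + C (-b)), ?_⟩
      have : f - c = ((f.comp (X + C b) - c.comp (X + C b)).comp (X + C (-b))) := by
        rw [sub_comp, hundo, hundo]
      rw [this, hk, mul_comp, hmfix']
end
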